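/- arXiv:2302.13534 — 11 statements merged into one kernel-verified Lean document; each statement's English description precedes it below -/
import Mathlib

section
/- Let Ω ⊆ ℝ be an open interval and let f, g : Ω → ℝ be continuously differentiable, strictly convex functions such that (i) f' and g' are differentiable and concave on Ω, (ii) g'(z) ≤ f'(z) for all z ∈ Ω, and (iii) g''(z) > 0 for all z ∈ Ω. Let x, m, y, n ∈ Ω satisfy x ≤ m and g'(y) − f'(x) = g'(n) − f'(m) = ξ for some fixed ξ ∈ ℝ. Then D(x, y) ≤ D(m, n), where D(u, v) = f(u) − g(v) − (u − v)·g'(v) is the skewed Bregman divergence. -/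
/-!
Write `g*` for the Legendre transform of `g`. Along the curve `g' v = f' u + ξ` the divergence is
`F u = f u + g* (f' u + ξ) - u (f' u + ξ)`. Since `(g*)' = (g')⁻¹`, we get
`F' u = (v - u) f'' u - ξ`, and concavity of `f'` together with `g' ≤ f'` gives
`(v - u) f'' u ≥ f' v - f' u ≥ g' v - f' u = ξ`. Hence `F` is monotone and
`D(x, y) = F x ≤ F m = D(m, n)`.
-/

open Set Filter Topology Function Asymptotics

lemma ConvexOn.add_mul_sub_le_of_hasDerivAt {S : Set ℝ} {f : ℝ → ℝ} {x y f' : ℝ}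
    (hfc : ConvexOn ℝ S f) (hx : x ∈ S) (hy : y ∈ S) (hf : HasDerivAt f f' x) :
    f x + f' * (y - x) ≤ f y := by
  rcases lt_trichotomy x y with hxy | rfl | hyx
  · have h := hfc.le_slope_of_hasDerivAt hx hy hxy hf
    rw [slope_def_field, le_div_iff₀ (sub_pos.2 hxy)] at h
    linarith
  · simp
  · have h := hfc.slope_le_of_hasDerivAt hy hx hyx hf
    rw [slope_def_field, div_le_iff₀ (sub_pos.2 hyx)] at h
    linarith

lemma ConcaveOn.le_add_mul_sub_of_hasDerivAt {S : Set ℝ} {f : ℝ → ℝ} {x y f' : ℝ}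
    (hfc : ConcaveOn ℝ S f) (hx : x ∈ S) (hy : y ∈ S) (hf : HasDerivAt f f' x) :
    f y ≤ f x + f' * (y - x) := by
  have := hfc.neg.add_mul_sub_le_of_hasDerivAt hx hy hf.neg
  simp only [Pi.neg_apply] at this
  linarith

lemma StrictConvexOn.strictMonoOn_of_hasDerivAt {S : Set ℝ} {f f' : ℝ → ℝ}
    (hfc : StrictConvexOn ℝ S f) (hf : ∀ x ∈ S, HasDerivAt f (f' x) x) : StrictMonoOn f' S :=
  fun x hx y hy hxy => (hfc.lt_slope_of_hasDerivAt hx hy hxy (hf x hx)).trans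
    (hfc.slope_lt_of_hasDerivAt hx hy hxy (hf y hy))

lemma hasDerivAt_of_abs_sub_le_mul {G ε : ℝ → ℝ} {c w₀ : ℝ} (hε : Tendsto ε (𝓝 w₀) (𝓝 0))
    (h : ∀ᶠ w in 𝓝 w₀, |G w - G w₀ - (w - w₀) * c| ≤ |w - w₀| * ε w) :
    HasDerivAt G c w₀ := by
  rw [hasDerivAt_iff_isLittleO]
  have hsmall : (fun w => (w - w₀) * ε w) =o[𝓝 w₀] fun w => w - w₀ := by
    simpa using (isBigO_refl (fun w => w - w₀) _).mul_isLittleO ((isLittleO_one_iff ℝ).2 hε)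
  refine IsBigO.trans_isLittleO (IsBigO.of_bound 1 ?_) hsmall
  filter_upwards [h] with w hw
  simp only [smul_eq_mul, Real.norm_eq_abs, one_mul, abs_mul]
  exact hw.trans (mul_le_mul_of_nonneg_left (le_abs_self _) (abs_nonneg _))

section OrderTopology

variable {α β : Type*} [ConditionallyCompleteLinearOrder α] [TopologicalSpace α] [OrderTopology α]
  [DenselyOrdered α] [NoMinOrder α] [NoMaxOrder α] [LinearOrder β] [TopologicalSpace β]
  [OrderTopology β] {φ : α → β} {s : Set α} {a : α}

theorem StrictMonoOn.image_mem_nhds (hφ : StrictMonoOn φ s) (hcont : ContinuousOn φ s)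
    (hs : s ∈ 𝓝 a) : φ '' s ∈ 𝓝 (φ a) := by
  obtain ⟨l, u, ⟨hla, hau⟩, hsub⟩ := mem_nhds_iff_exists_Ioo_subset.1 hs
  obtain ⟨l', hll', hl'a⟩ := exists_between hla
  obtain ⟨u', hau', hu'u⟩ := exists_between hau
  have hIcc : Icc l' u' ⊆ s := (Icc_subset_Ioo hll' hu'u).trans hsub
  have hl's : l' ∈ s := hIcc (left_mem_Icc.2 (hl'a.trans hau').le)
  have hu's : u' ∈ s := hIcc (right_mem_Icc.2 (hl'a.trans hau').le)
  have has : a ∈ s := mem_of_mem_nhds hs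
  refine mem_of_superset (Icc_mem_nhds (hφ hl's has hl'a) (hφ has hu's hau')) ?_
  exact (intermediate_value_Icc (hl'a.trans hau').le (hcont.mono hIcc)).trans (image_mono hIcc)

theorem StrictMonoOn.continuousAt_invFunOn (hφ : StrictMonoOn φ s)
    (hcont : ContinuousOn φ s) (hs : IsOpen s) (ha : a ∈ s) :
    ContinuousAt (invFunOn φ s) (φ a) := by
  have hinv : LeftInvOn (invFunOn φ s) φ s := hφ.injOn.leftInvOn_invFunOn
  refine continuousAt_of_monotoneOn_of_image_mem_nhds ?_
    (hφ.image_mem_nhds hcont (hs.mem_nhds ha)) ?_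
  · rintro _ ⟨v, hv, rfl⟩ _ ⟨v', hv', rfl⟩ hvv'
    rw [hinv hv, hinv hv']
    exact (hφ.le_iff_le hv hv').1 hvv'
  · rw [hφ.injOn.invFunOn_image Subset.rfl, hinv ha]
    exact hs.mem_nhds ha

end OrderTopology

/-- The Legendre transform of `g`, as `w v - g v` at the point `v ∈ s` with `g' v = w`; junk off
`g' '' s`. -/
noncomputable def legendreTransform (g g' : ℝ → ℝ) (s : Set ℝ) (w : ℝ) : ℝ :=
  w * invFunOn g' s w - g (invFunOn g' s w)

section Legendre

variable {s : Set ℝ} {g g' : ℝ → ℝ}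

lemma legendreTransform_apply (hg' : InjOn g' s) {v : ℝ} (hv : v ∈ s) :
    legendreTransform g g' s (g' v) = g' v * v - g v := by
  rw [legendreTransform, hg'.leftInvOn_invFunOn hv]

lemma hasDerivAt_legendreTransform (hs : IsOpen s) (hgc : StrictConvexOn ℝ s g)
    (hg : ∀ v ∈ s, HasDerivAt g (g' v) v) (hg'cont : ContinuousOn g' s) {v : ℝ} (hv : v ∈ s) :
    HasDerivAt (legendreTransform g g' s) v (g' v) := by
  have hmono := hgc.strictMonoOn_of_hasDerivAt hg
  set V := invFunOn g' s
  have hVv : V (g' v) = v := hmono.injOn.leftInvOn_invFunOn hv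
  have hVcont : Tendsto (fun w => |V w - v|) (𝓝 (g' v)) (𝓝 0) := by
    have : ContinuousAt (fun w => |V w - v|) (g' v) :=
      ((hmono.continuousAt_invFunOn hg'cont hs hv).sub_const v).abs
    simpa only [ContinuousAt, hVv, sub_self, abs_zero] using this
  refine hasDerivAt_of_abs_sub_le_mul hVcont ?_
  filter_upwards [hmono.image_mem_nhds hg'cont (hs.mem_nhds hv)] with w hw
  have hVw : V w ∈ s ∧ g' (V w) = w := invFunOn_pos hw
  have hlow := hgc.convexOn.add_mul_sub_le_of_hasDerivAt hVw.1 hv (hg _ hVw.1)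
  have hupp := hgc.convexOn.add_mul_sub_le_of_hasDerivAt hv hVw.1 (hg v hv)
  rw [hVw.2] at hlow
  have hprod : (w - g' v) * (V w - v) ≤ |w - g' v| * |V w - v| :=
    abs_mul (w - g' v) (V w - v) ▸ le_abs_self _
  rw [legendreTransform_apply hmono.injOn hv, legendreTransform, abs_le]
  -- the tangents of `g` at `V w` and at `v` bound the remainder below by `0`, above by `hprod`
  exact ⟨by linarith [mul_nonneg (abs_nonneg (w - g' v)) (abs_nonneg (V w - v))], by linarith⟩

end Legendre

/-- The skewed Bregman divergence `f t - g v - (t - v) g' v` along the curve `g' v = f' t + ξ`. -/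
noncomputable def skewedPath (f g f' g' : ℝ → ℝ) (s : Set ℝ) (ξ t : ℝ) : ℝ :=
  f t + legendreTransform g g' s (f' t + ξ) - t * (f' t + ξ)

section SkewedPath

variable {Ω : Set ℝ} {f g f' g' f'' : ℝ → ℝ} {ξ : ℝ}

lemma skewedPath_eq (hg' : InjOn g' Ω) {u v : ℝ} (hv : v ∈ Ω) (huv : f' u + ξ = g' v) :
    skewedPath f g f' g' Ω ξ u = f u - g v - (u - v) * g' v := by
  rw [skewedPath, huv, legendreTransform_apply hg' hv]
  ring

lemma hasDerivAt_skewedPath (hΩ : IsOpen Ω) (hgc : StrictConvexOn ℝ Ω g)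
    (hg : ∀ v ∈ Ω, HasDerivAt g (g' v) v) (hg'cont : ContinuousOn g' Ω) {u v : ℝ}
    (hf : HasDerivAt f (f' u) u) (hf' : HasDerivAt f' (f'' u) u) (hv : v ∈ Ω)
    (huv : f' u + ξ = g' v) :
    HasDerivAt (skewedPath f g f' g' Ω ξ) ((v - u) * f'' u - ξ) u := by
  have hL := hasDerivAt_legendreTransform hΩ hgc hg hg'cont hv
  rw [← huv] at hL
  have hφ : HasDerivAt (fun t => f' t + ξ) (f'' u) u := hf'.add_const ξ
  refine ((hf.add (hL.comp u hφ)).sub ((hasDerivAt_id u).mul hφ)).congr_deriv ?_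
  simp only [id]
  ring

theorem monotoneOn_skewedPath (hΩ : IsOpen Ω) (hgc : StrictConvexOn ℝ Ω g)
    (hg : ∀ v ∈ Ω, HasDerivAt g (g' v) v) (hg'cont : ContinuousOn g' Ω)
    (hf : ∀ z ∈ Ω, HasDerivAt f (f' z) z) (hf' : ∀ z ∈ Ω, HasDerivAt f' (f'' z) z)
    (hf'conc : ConcaveOn ℝ Ω f') (hle : ∀ z ∈ Ω, g' z ≤ f' z) {I : Set ℝ} (hI : Convex ℝ I)
    (hIΩ : I ⊆ Ω) (hrange : ∀ u ∈ I, f' u + ξ ∈ g' '' Ω) :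
    MonotoneOn (skewedPath f g f' g' Ω ξ) I := by
  have hderiv : ∀ u ∈ I, ∃ d, HasDerivAt (skewedPath f g f' g' Ω ξ) d u ∧ 0 ≤ d := by
    intro u hu
    obtain ⟨v, hv, hvu⟩ := hrange u hu
    refine ⟨_, hasDerivAt_skewedPath hΩ hgc hg hg'cont (hf u (hIΩ hu)) (hf' u (hIΩ hu)) hv
      hvu.symm, ?_⟩
    have htangent := hf'conc.le_add_mul_sub_of_hasDerivAt (hIΩ hu) hv (hf' u (hIΩ hu))
    linarith [hle v hv]
  choose d hd hd_nonneg using hderiv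
  refine monotoneOn_of_deriv_nonneg hI (fun u hu => (hd u hu).continuousAt.continuousWithinAt)
    (fun u hu => (hd u (interior_subset hu)).differentiableAt.differentiableWithinAt) ?_
  intro u hu
  rw [(hd u (interior_subset hu)).deriv]
  exact hd_nonneg u _

end SkewedPath

theorem skewed_bregman_monotone_general
    (Ω : Set ℝ) (hΩopen : IsOpen Ω) (hΩconv : Convex ℝ Ω)
    (f g f' g' f'' : ℝ → ℝ)
    (hf : ∀ z ∈ Ω, HasDerivAt f (f' z) z)
    (hg : ∀ z ∈ Ω, HasDerivAt g (g' z) z)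
    (hg'cont : ContinuousOn g' Ω)
    (hfconv : StrictConvexOn ℝ Ω f) (hgconv : StrictConvexOn ℝ Ω g)
    (hf'deriv : ∀ z ∈ Ω, HasDerivAt f' (f'' z) z)
    (hf'conc : ConcaveOn ℝ Ω f')
    (hle : ∀ z ∈ Ω, g' z ≤ f' z)
    (x m y n : ℝ) (hx : x ∈ Ω) (hm : m ∈ Ω) (hy : y ∈ Ω) (hn : n ∈ Ω)
    (hxm : x ≤ m) (ξ : ℝ)
    (hxy : g' y - f' x = ξ) (hmn : g' n - f' m = ξ) :
    f x - g y - (x - y) * g' y ≤ f m - g n - (m - n) * g' n := by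
  have hf'mono := (hfconv.strictMonoOn_of_hasDerivAt hf).monotoneOn
  have hg'inj := (hgconv.strictMonoOn_of_hasDerivAt hg).injOn
  have hIΩ : Icc x m ⊆ Ω := hΩconv.ordConnected.out hx hm
  have hyn : uIcc y n ⊆ Ω := hΩconv.ordConnected.uIcc_subset hy hn
  have hrange : ∀ u ∈ Icc x m, f' u + ξ ∈ g' '' Ω := by
    intro u hu
    have hmid : f' u + ξ ∈ uIcc (g' y) (g' n) := Icc_subset_uIcc
      ⟨by linarith [hf'mono hx (hIΩ hu) hu.1], by linarith [hf'mono (hIΩ hu) hm hu.2]⟩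
    exact image_mono hyn (intermediate_value_uIcc (hg'cont.mono hyn) hmid)
  have hpath := monotoneOn_skewedPath hΩopen hgconv hg hg'cont hf hf'deriv hf'conc hle
    (convex_Icc x m) hIΩ hrange (left_mem_Icc.2 hxm) (right_mem_Icc.2 hxm) hxm
  rwa [skewedPath_eq hg'inj hy (by linarith), skewedPath_eq hg'inj hn (by linarith)] at hpath

/-- Theorem 4.2 (monotonicity of the skewed Bregman divergence). -/
theorem skewed_bregman_monotone
    (Ω : Set ℝ) (hΩopen : IsOpen Ω) (hΩconv : Convex ℝ Ω)
    (f g f' g' f'' g'' : ℝ → ℝ)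
    (hf : ∀ z ∈ Ω, HasDerivAt f (f' z) z)
    (hg : ∀ z ∈ Ω, HasDerivAt g (g' z) z)
    (hf'cont : ContinuousOn f' Ω) (hg'cont : ContinuousOn g' Ω)
    (hfconv : StrictConvexOn ℝ Ω f) (hgconv : StrictConvexOn ℝ Ω g)
    (hf'deriv : ∀ z ∈ Ω, HasDerivAt f' (f'' z) z)
    (hg'deriv : ∀ z ∈ Ω, HasDerivAt g' (g'' z) z)
    (hf'conc : ConcaveOn ℝ Ω f') (hg'conc : ConcaveOn ℝ Ω g')
    (hle : ∀ z ∈ Ω, g' z ≤ f' z)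
    (hg''pos : ∀ z ∈ Ω, 0 < g'' z)
    (x m y n : ℝ) (hx : x ∈ Ω) (hm : m ∈ Ω) (hy : y ∈ Ω) (hn : n ∈ Ω)
    (hxm : x ≤ m) (ξ : ℝ)
    (hxy : g' y - f' x = ξ) (hmn : g' n - f' m = ξ) :
    f x - g y - (x - y) * g' y ≤ f m - g n - (m - n) * g' n :=
  skewed_bregman_monotone_general Ω hΩopen hΩconv f g f' g' f'' hf hg hg'cont hfconv hgconv hf'deriv
    hf'conc hle x m y n hx hm hy hn hxm ξ hxy hmn
end

section
/- Let T be a positive integer, let x_1, …, x_T be positive reals, and let α ∈ [0,1]. Then ∑_{t=1}^{T} x_t^{1−α} / √(1 + ∑_{s=1}^{t} x_s^{1−2α}) ≤ 2·√( (∑_{t=1}^{T} x_t) · log(1 + ∑_{t=1}^{T} x_t^{1−2α}) ). -/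
/-!
Write each term as `√(x t) · √(x t ^ (1 - 2α) / S t)`, where `S t = 1 + ∑_{s ≤ t} x s ^ (1 - 2α)`.
Cauchy–Schwarz bounds the sum by `√(∑ x t) · √(∑ (S t - S (t-1)) / S t)`, and the second sum
telescopes against the logarithm, since `(b - a) / b ≤ log b - log a` for `0 < a ≤ b`.
-/

open Finset Real

lemma div_add_le_log_add_sub_log {a d : ℝ} (ha : 0 < a) (hd : 0 ≤ d) :
    d / (a + d) ≤ log (a + d) - log a := by
  have had : 0 < a + d := by linarith
  have key := one_sub_inv_le_log_of_pos (div_pos had ha)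
  rw [log_div had.ne' ha.ne', inv_div] at key
  calc d / (a + d) = 1 - a / (a + d) := by field_simp; ring
    _ ≤ log (a + d) - log a := key

lemma sum_div_partial_sum_le_log_sub_log {c : ℝ} (hc : 0 < c) (f : ℕ → ℝ) (n : ℕ)
    (hf : ∀ t ∈ Icc 1 n, 0 ≤ f t) :
    ∑ t ∈ Icc 1 n, f t / (c + ∑ s ∈ Icc 1 t, f s)
      ≤ log (c + ∑ t ∈ Icc 1 n, f t) - log c := by
  induction n with
  | zero => simp
  | succ n ih =>
    have hf' : ∀ t ∈ Icc 1 n, 0 ≤ f t := fun t ht =>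
      hf t (Icc_subset_Icc_right n.le_succ ht)
    have hpartial : 0 < c + ∑ t ∈ Icc 1 n, f t := by
      have := sum_nonneg hf'
      linarith
    have hlast : 0 ≤ f (n + 1) := hf _ (by simp)
    have hstep := div_add_le_log_add_sub_log hpartial hlast
    rw [sum_Icc_succ_top (by omega), sum_Icc_succ_top (by omega), ← add_assoc]
    linarith [ih hf']

lemma sum_sqrt_mul_sqrt_le_of_nonneg_on {ι : Type*} (s : Finset ι) {f g : ι → ℝ}
    (hf : ∀ i ∈ s, 0 ≤ f i) (hg : ∀ i ∈ s, 0 ≤ g i) :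
    ∑ i ∈ s, √(f i) * √(g i) ≤ √(∑ i ∈ s, f i) * √(∑ i ∈ s, g i) := by
  have hsq {h : ι → ℝ} (hh : ∀ i ∈ s, 0 ≤ h i) : ∑ i ∈ s, √(h i) ^ 2 = ∑ i ∈ s, h i :=
    sum_congr rfl fun i hi => sq_sqrt (hh i hi)
  simpa only [hsq hf, hsq hg] using sum_mul_le_sqrt_mul_sqrt s (fun i => √(f i)) fun i => √(g i)

lemma sqrt_mul_sqrt_rpow_one_sub_two_mul {x : ℝ} (hx : 0 < x) (α : ℝ) :
    √x * √(x ^ (1 - 2 * α)) = x ^ (1 - α) := by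
  rw [← sqrt_mul hx.le, mul_comm, ← rpow_add_one hx.ne', sqrt_eq_rpow, ← rpow_mul hx.le]
  ring_nf

theorem lr_design_inequality_general (T : ℕ) (x : ℕ → ℝ)
    (hx : ∀ t ∈ Finset.Icc 1 T, 0 < x t)
    (α : ℝ) :
    ∑ t ∈ Finset.Icc 1 T,
        x t ^ (1 - α) / Real.sqrt (1 + ∑ s ∈ Finset.Icc 1 t, x s ^ (1 - 2 * α))
      ≤ 2 * Real.sqrt ((∑ t ∈ Finset.Icc 1 T, x t) *
          Real.log (1 + ∑ t ∈ Finset.Icc 1 T, x t ^ (1 - 2 * α))) := by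
  set f : ℕ → ℝ := fun t => x t ^ (1 - 2 * α)
  set S : ℕ → ℝ := fun t => 1 + ∑ s ∈ Icc 1 t, f s
  have hf : ∀ t ∈ Icc 1 T, 0 ≤ f t := fun t ht => rpow_nonneg (hx t ht).le _
  have hS : ∀ t ∈ Icc 1 T, 0 < S t := fun t ht => by
    have := sum_nonneg fun s hs => hf s (Icc_subset_Icc_right (mem_Icc.mp ht).2 hs)
    positivity
  have hlog : ∑ t ∈ Icc 1 T, f t / S t ≤ log (S T) := by
    simpa using sum_div_partial_sum_le_log_sub_log one_pos f T hf
  calc ∑ t ∈ Icc 1 T, x t ^ (1 - α) / √(S t)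
      = ∑ t ∈ Icc 1 T, √(x t) * √(f t / S t) := sum_congr rfl fun t ht => by
        rw [sqrt_div (hf t ht), ← mul_div_assoc, sqrt_mul_sqrt_rpow_one_sub_two_mul (hx t ht)]
    _ ≤ √(∑ t ∈ Icc 1 T, x t) * √(∑ t ∈ Icc 1 T, f t / S t) :=
        sum_sqrt_mul_sqrt_le_of_nonneg_on _ (fun t ht => (hx t ht).le) fun t ht =>
          div_nonneg (hf t ht) (hS t ht).le
    _ ≤ √(∑ t ∈ Icc 1 T, x t) * √(log (S T)) := by gcongr
    _ = √((∑ t ∈ Icc 1 T, x t) * log (S T)) :=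
        (sqrt_mul (sum_nonneg fun t ht => (hx t ht).le) _).symm
    _ ≤ 2 * √((∑ t ∈ Icc 1 T, x t) * log (S T)) :=
        le_mul_of_one_le_left (sqrt_nonneg _) one_le_two

/-- Lemma 4.1: the learning-rate design inequality. -/
theorem lr_design_inequality (T : ℕ) (hT : 1 ≤ T) (x : ℕ → ℝ)
    (hx : ∀ t ∈ Finset.Icc 1 T, 0 < x t)
    (α : ℝ) (hα : α ∈ Set.Icc (0 : ℝ) 1) :
    ∑ t ∈ Finset.Icc 1 T,
        x t ^ (1 - α) / Real.sqrt (1 + ∑ s ∈ Finset.Icc 1 t, x s ^ (1 - 2 * α))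
      ≤ 2 * Real.sqrt ((∑ t ∈ Finset.Icc 1 T, x t) *
          Real.log (1 + ∑ t ∈ Finset.Icc 1 T, x t ^ (1 - 2 * α))) :=
  lr_design_inequality_general T x hx α
end

section
/- Let T be a positive integer, let x_1, …, x_T and a_1, …, a_T be positive reals, and let α ∈ [0,1]. Then ∑_{t=1}^{T} x_t^{1−α} a_t / √(1 + ∑_{s=1}^{t} x_s^{1−2α}) ≤ 2·√( (∑_{t=1}^{T} x_t a_t^2) · log(1 + ∑_{t=1}^{T} x_t^{1−2α}) ). -/
/-!
Write the summand as `(√x_t a_t) · √(b_t / S_t)` with `b_t = x_t^(1-2α)` and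
`S_t = 1 + b_1 + ⋯ + b_t`, and apply Cauchy–Schwarz. The second factor is controlled by
`b_t / S_t ≤ log S_t - log S_{t-1}`, whose sum telescopes to `log S_T`.
-/

open Finset Real

lemma div_add_le_log_add_sub_log_s2 {S b : ℝ} (hS : 0 < S) (hb : 0 ≤ b) :
    b / (S + b) ≤ log (S + b) - log S := by
  have hSb : 0 < S + b := by linarith
  rw [← log_div hSb.ne' hS.ne']
  calc b / (S + b) = 1 - ((S + b) / S)⁻¹ := by field_simp; ring
    _ ≤ log ((S + b) / S) := one_sub_inv_le_log_of_pos (by positivity)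

lemma sum_div_one_add_partial_sum_le_log (b : ℕ → ℝ) (n : ℕ) (hb : ∀ t ∈ Icc 1 n, 0 ≤ b t) :
    ∑ t ∈ Icc 1 n, b t / (1 + ∑ s ∈ Icc 1 t, b s) ≤ log (1 + ∑ s ∈ Icc 1 n, b s) := by
  induction n with
  | zero => simp
  | succ n ih =>
    have hb' : ∀ t ∈ Icc 1 n, 0 ≤ b t := fun t ht => hb t (Icc_subset_Icc_right n.le_succ ht)
    have hS : 0 < 1 + ∑ s ∈ Icc 1 n, b s := add_pos_of_pos_of_nonneg one_pos (sum_nonneg hb')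
    rw [sum_Icc_succ_top (by omega), sum_Icc_succ_top (by omega), ← add_assoc]
    linarith [ih hb', div_add_le_log_add_sub_log_s2 hS (hb (n + 1) (by simp))]

lemma rpow_one_sub_mul_div_sqrt {x : ℝ} (hx : 0 < x) (α a S : ℝ) :
    x ^ (1 - α) * a / √S = √x * a * √(x ^ (1 - 2 * α) / S) := by
  have hsplit : x ^ (1 - α) = √x * √(x ^ (1 - 2 * α)) := by
    rw [sqrt_eq_rpow, sqrt_eq_rpow, ← rpow_mul hx.le, ← rpow_add hx]
    ring_nf
  rw [sqrt_div (rpow_nonneg hx.le _), hsplit]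
  ring

theorem lr_design_inequality_weighted_general (T : ℕ) (x a : ℕ → ℝ)
    (hx : ∀ t ∈ Finset.Icc 1 T, 0 < x t)
    (α : ℝ) :
    ∑ t ∈ Finset.Icc 1 T,
        x t ^ (1 - α) * a t / Real.sqrt (1 + ∑ s ∈ Finset.Icc 1 t, x s ^ (1 - 2 * α))
      ≤ 2 * Real.sqrt ((∑ t ∈ Finset.Icc 1 T, x t * (a t) ^ 2) *
          Real.log (1 + ∑ t ∈ Finset.Icc 1 T, x t ^ (1 - 2 * α))) := by
  set b : ℕ → ℝ := fun t => x t ^ (1 - 2 * α)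
  set S : ℕ → ℝ := fun t => 1 + ∑ s ∈ Icc 1 t, b s
  have hb : ∀ t ∈ Icc 1 T, 0 ≤ b t := fun t ht => rpow_nonneg (hx t ht).le _
  have hS : ∀ t ∈ Icc 1 T, 0 ≤ S t := fun t ht =>
    add_nonneg zero_le_one (sum_nonneg fun s hs => hb s (Icc_subset_Icc_right (mem_Icc.1 ht).2 hs))
  have hA : ∑ t ∈ Icc 1 T, (√(x t) * a t) ^ 2 = ∑ t ∈ Icc 1 T, x t * a t ^ 2 :=
    sum_congr rfl fun t ht => by rw [mul_pow, sq_sqrt (hx t ht).le]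
  have hL : ∑ t ∈ Icc 1 T, √(b t / S t) ^ 2 ≤ log (S T) := by
    rw [sum_congr rfl fun t ht => sq_sqrt (div_nonneg (hb t ht) (hS t ht))]
    exact sum_div_one_add_partial_sum_le_log b T hb
  calc ∑ t ∈ Icc 1 T, x t ^ (1 - α) * a t / √(S t)
      = ∑ t ∈ Icc 1 T, √(x t) * a t * √(b t / S t) :=
        sum_congr rfl fun t ht => rpow_one_sub_mul_div_sqrt (hx t ht) α (a t) (S t)
    _ ≤ √(∑ t ∈ Icc 1 T, (√(x t) * a t) ^ 2) * √(∑ t ∈ Icc 1 T, √(b t / S t) ^ 2) :=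
        sum_mul_le_sqrt_mul_sqrt _ _ _
    _ ≤ √(∑ t ∈ Icc 1 T, x t * a t ^ 2) * √(log (S T)) := by rw [hA]; gcongr
    _ = √((∑ t ∈ Icc 1 T, x t * a t ^ 2) * log (S T)) :=
        (sqrt_mul (sum_nonneg fun t ht => mul_nonneg (hx t ht).le (sq_nonneg _)) _).symm
    _ ≤ 2 * √((∑ t ∈ Icc 1 T, x t * a t ^ 2) * log (S T)) :=
        le_mul_of_one_le_left (sqrt_nonneg _) one_le_two

/-- Weighted learning-rate design inequality (Lemma `app_lr_design_gen`). -/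
theorem lr_design_inequality_weighted (T : ℕ) (hT : 1 ≤ T) (x a : ℕ → ℝ)
    (hx : ∀ t ∈ Finset.Icc 1 T, 0 < x t)
    (ha : ∀ t ∈ Finset.Icc 1 T, 0 < a t)
    (α : ℝ) (hα : α ∈ Set.Icc (0 : ℝ) 1) :
    ∑ t ∈ Finset.Icc 1 T,
        x t ^ (1 - α) * a t / Real.sqrt (1 + ∑ s ∈ Finset.Icc 1 t, x s ^ (1 - 2 * α))
      ≤ 2 * Real.sqrt ((∑ t ∈ Finset.Icc 1 T, x t * (a t) ^ 2) *
          Real.log (1 + ∑ t ∈ Finset.Icc 1 T, x t ^ (1 - 2 * α))) :=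
  lr_design_inequality_weighted_general T x a hx α
end

section
/- Let Ω ⊆ ℝ be an open interval and f, g : Ω → ℝ be twice differentiable with f''(u) > 0 and g''(u) > 0 for all u ∈ Ω, so that f' and g' are strictly increasing and invertible on their images; assume moreover that the inverse functions (f')^{−1} and (g')^{−1} are differentiable and convex on their domains. Then for any p, q ∈ Ω and z ∈ ℝ satisfying g'(q) = f'(p) − z, the following four inequalities hold: (1) q ≥ p + (f'(p) − g'(p) − z)/g''(p); (2) q ≤ p + (f'(p) − g'(p) − z)/g''(q); (3) q ≥ p + (f'(q) − g'(q) − z)/f''(p); (4) q ≤ p + (f'(q) − g'(q) − z)/f''(q). -/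
open Set

/-- If `φ` has positive derivative `φ'` on an open convex set `Ω` and admits a convex
left inverse `ι` on `φ '' Ω`, then `φ` is concave on `Ω`. -/
lemma concave_of_inv_convex (Ω : Set ℝ) (hΩopen : IsOpen Ω) (hΩconv : Convex ℝ Ω)
    (φ φ' ι : ℝ → ℝ)
    (hφ : ∀ u ∈ Ω, HasDerivAt φ (φ' u) u)
    (hφ'pos : ∀ u ∈ Ω, 0 < φ' u)
    (hι : ∀ u ∈ Ω, ι (φ u) = u)
    (hconv : ConvexOn ℝ (φ '' Ω) ι) :
    ConcaveOn ℝ Ω φ := by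
  have hmono : StrictMonoOn φ Ω := by
    apply strictMonoOn_of_deriv_pos hΩconv
    · exact fun u hu => (hφ u hu).continuousAt.continuousWithinAt
    · intro u hu
      rw [hΩopen.interior_eq] at hu
      rw [(hφ u hu).deriv]
      exact hφ'pos u hu
  refine ⟨hΩconv, fun x hx y hy a b ha hb hab => ?_⟩
  have hmem : a • φ x + b • φ y ∈ φ '' Ω :=
    hconv.1 (mem_image_of_mem φ hx) (mem_image_of_mem φ hy) ha hb hab
  obtain ⟨u, hu, huv⟩ := hmem
  have hxy : a • x + b • y ∈ Ω := hΩconv hx hy ha hb hab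
  have hu_le : u ≤ a • x + b • y := by
    have := hconv.2 (mem_image_of_mem φ hx) (mem_image_of_mem φ hy) ha hb hab
    rw [hι x hx, hι y hy] at this
    calc u = ι (φ u) := (hι u hu).symm
      _ = ι (a • φ x + b • φ y) := by rw [huv]
      _ ≤ a • x + b • y := this
  calc a • φ x + b • φ y = φ u := huv.symm
    _ ≤ φ (a • x + b • y) := hmono.monotoneOn hu hxy hu_le

/-- Tangent line inequality for concave functions. -/
lemma concave_tangent (S : Set ℝ) (φ : ℝ → ℝ) (hc : ConcaveOn ℝ S φ)
    {p q d : ℝ} (hp : p ∈ S) (hq : q ∈ S) (hd : HasDerivAt φ d p) :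
    φ q ≤ φ p + d * (q - p) := by
  rcases lt_trichotomy q p with h | h | h
  · have hs := hc.le_slope_of_hasDerivAt hq hp h hd
    rw [slope_def_field, le_div_iff₀ (by linarith)] at hs
    nlinarith
  · simp [h]
  · have hs := hc.slope_le_of_hasDerivAt hp hq h hd
    rw [slope_def_field, div_le_iff₀ (by linarith)] at hs
    nlinarith

/-- Lemma C.3 (`lemma_21_raw`): one-dimensional comparison lemma. -/
theorem one_dim_comparison
    (Ω : Set ℝ) (hΩopen : IsOpen Ω) (hΩconv : Convex ℝ Ω)
    (f g f' g' f'' g'' fInv gInv : ℝ → ℝ)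
    (hf : ∀ u ∈ Ω, HasDerivAt f (f' u) u)
    (hg : ∀ u ∈ Ω, HasDerivAt g (g' u) u)
    (hf' : ∀ u ∈ Ω, HasDerivAt f' (f'' u) u)
    (hg' : ∀ u ∈ Ω, HasDerivAt g' (g'' u) u)
    (hf''pos : ∀ u ∈ Ω, 0 < f'' u)
    (hg''pos : ∀ u ∈ Ω, 0 < g'' u)
    (hfInv : ∀ u ∈ Ω, fInv (f' u) = u)
    (hgInv : ∀ u ∈ Ω, gInv (g' u) = u)
    (hfInvDiff : DifferentiableOn ℝ fInv (f' '' Ω))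
    (hgInvDiff : DifferentiableOn ℝ gInv (g' '' Ω))
    (hfInvConv : ConvexOn ℝ (f' '' Ω) fInv)
    (hgInvConv : ConvexOn ℝ (g' '' Ω) gInv)
    (p q : ℝ) (hp : p ∈ Ω) (hq : q ∈ Ω) (z : ℝ)
    (hpq : g' q = f' p - z) :
    p + (f' p - g' p - z) / g'' p ≤ q ∧
    q ≤ p + (f' p - g' p - z) / g'' q ∧
    p + (f' q - g' q - z) / f'' p ≤ q ∧
    q ≤ p + (f' q - g' q - z) / f'' q := by
  have hgcon : ConcaveOn ℝ Ω g' :=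
    concave_of_inv_convex Ω hΩopen hΩconv g' g'' gInv hg' hg''pos hgInv hgInvConv
  have hfcon : ConcaveOn ℝ Ω f' :=
    concave_of_inv_convex Ω hΩopen hΩconv f' f'' fInv hf' hf''pos hfInv hfInvConv
  have h1 : g' q ≤ g' p + g'' p * (q - p) := concave_tangent Ω g' hgcon hp hq (hg' p hp)
  have h2 : g' p ≤ g' q + g'' q * (p - q) := concave_tangent Ω g' hgcon hq hp (hg' q hq)
  have h3 : f' q ≤ f' p + f'' p * (q - p) := concave_tangent Ω f' hfcon hp hq (hf' p hp)
  have h4 : f' p ≤ f' q + f'' q * (p - q) := concave_tangent Ω f' hfcon hq hp (hf' q hq)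
  have hgp := hg''pos p hp
  have hgq := hg''pos q hq
  have hfp := hf''pos p hp
  have hfq := hf''pos q hq
  refine ⟨?_, ?_, ?_, ?_⟩
  · have h : (f' p - g' p - z) / g'' p ≤ q - p := by
      rw [div_le_iff₀ hgp]; nlinarith
    linarith
  · have h : q - p ≤ (f' p - g' p - z) / g'' q := by
      rw [le_div_iff₀ hgq]; nlinarith
    linarith
  · have h : (f' q - g' q - z) / f'' p ≤ q - p := by
      rw [div_le_iff₀ hfp]; nlinarith
    linarith
  · have h : q - p ≤ (f' q - g' q - z) / f'' q := by
      rw [le_div_iff₀ hfq]; nlinarith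
    linarith
end

section
/- Let I be a finite nonempty index set, Ω ⊆ ℝ an open interval, θ > 0, and let ψ, r : Ω → ℝ be twice differentiable with ψ''(u) > 0 and r''(u) > 0 for all u ∈ Ω. Suppose that for each i ∈ I and each of the scalars a ∈ {γ_i, γ'_i} (with γ_i, γ'_i > 0), the function u ↦ a·ψ(u) + θ·r(u) has strictly increasing derivative whose inverse function is differentiable and convex. Let ℓ ∈ ℝ^I, c ∈ ℝ, and p, q ∈ Ω^I satisfy γ'_i ψ'(q_i) + θ r'(q_i) = γ_i ψ'(p_i) + θ r'(p_i) − ℓ_i + c for every i ∈ I, and ∑_{i∈I} p_i = ∑_{i∈I} q_i. Then: (1) c ≤ (∑_i 1/(γ'_i ψ''(p_i) + θ r''(p_i)))^{−1} ∑_i ((γ'_i − γ_i)ψ'(p_i) + ℓ_i)/(γ'_i ψ''(p_i) + θ r''(p_i)); (2) c ≥ (∑_i 1/(γ_i ψ''(q_i) + θ r''(q_i)))^{−1} ∑_i ((γ'_i − γ_i)ψ'(q_i) + ℓ_i)/(γ_i ψ''(q_i) + θ r''(q_i)); (3) c ≤ (∑_i 1/(γ_i ψ''(p_i) + θ r''(p_i)))^{−1}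 ∑_i ((γ'_i − γ_i)ψ'(q_i) + ℓ_i)/(γ_i ψ''(p_i) + θ r''(p_i)); (4) c ≥ (∑_i 1/(γ'_i ψ''(q_i) + θ r''(q_i)))^{−1} ∑_i ((γ'_i − γ_i)ψ'(p_i) + ℓ_i)/(γ'_i ψ''(q_i) + θ r''(q_i)). -/
open Filter Topology Set

private lemma key_tangent {Ω : Set ℝ} (hΩopen : IsOpen Ω)
    {F Fd : ℝ → ℝ} (hF : ∀ u ∈ Ω, HasDerivAt F (Fd u) u)
    (hFdpos : ∀ u ∈ Ω, 0 < Fd u)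
    (hmono : StrictMonoOn F Ω)
    {g : ℝ → ℝ} (hg : ∀ u ∈ Ω, g (F u) = u)
    (hgconv : ConvexOn ℝ (F '' Ω) g)
    {x y : ℝ} (hx : x ∈ Ω) (hy : y ∈ Ω) :
    (F y - F x) / Fd x ≤ y - x := by
  have hFdx : (0:ℝ) < Fd x := hFdpos x hx
  have hslope : Tendsto (fun z => (slope F x z)⁻¹) (𝓝[≠] x) (𝓝 (Fd x)⁻¹) :=
    (hasDerivAt_iff_tendsto_slope.mp (hF x hx)).inv₀ hFdx.ne'
  have hmemΩ : ∀ᶠ z in 𝓝 x, z ∈ Ω := hΩopen.eventually_mem hx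
  rcases lt_trichotomy (F x) (F y) with hlt | heq | hgt
  · -- F x < F y
    have hxy : x < y := (hmono.lt_iff_lt hx hy).mp hlt
    have hA : (Fd x)⁻¹ ≤ (y - x) / (F y - F x) := by
      have htend : Tendsto (fun z => (slope F x z)⁻¹) (𝓝[<] x) (𝓝 (Fd x)⁻¹) :=
        hslope.mono_left (nhdsWithin_mono x (fun z hz => ne_of_lt hz))
      refine le_of_tendsto htend ?_
      filter_upwards [hmemΩ.filter_mono nhdsWithin_le_nhds, self_mem_nhdsWithin]
        with z hzΩ (hzlt : z < x)
      have hFz : F z < F x := hmono hzΩ hx hzlt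
      have hsl := hgconv.slope_mono_adjacent (Set.mem_image_of_mem F hzΩ)
        (Set.mem_image_of_mem F hy) hFz hlt
      rw [hg z hzΩ, hg x hx, hg y hy] at hsl
      have : (slope F x z)⁻¹ = (x - z) / (F x - F z) := by
        rw [slope_def_field, inv_div,
          show z - x = -(x - z) by ring, show F z - F x = -(F x - F z) by ring,
          neg_div_neg_eq]
      rw [this]
      exact hsl
    have h1 : (F y - F x) * (Fd x)⁻¹ ≤ (F y - F x) * ((y - x) / (F y - F x)) :=
      mul_le_mul_of_nonneg_left hA (by linarith)
    rw [mul_div_cancel₀ _ (by linarith : F y - F x ≠ 0)] at h1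
    rw [div_eq_mul_inv]
    exact h1
  · have hxyeq : x = y := hmono.injOn hx hy heq
    simp [hxyeq]
  · -- F y < F x
    have hxy : y < x := (hmono.lt_iff_lt hy hx).mp hgt
    have hA : (x - y) / (F x - F y) ≤ (Fd x)⁻¹ := by
      have htend : Tendsto (fun z => (slope F x z)⁻¹) (𝓝[>] x) (𝓝 (Fd x)⁻¹) :=
        hslope.mono_left (nhdsWithin_mono x (fun z hz => ne_of_gt hz))
      refine ge_of_tendsto htend ?_
      filter_upwards [hmemΩ.filter_mono nhdsWithin_le_nhds, self_mem_nhdsWithin]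
        with z hzΩ (hzgt : x < z)
      have hFz : F x < F z := hmono hx hzΩ hzgt
      have hsl := hgconv.slope_mono_adjacent (Set.mem_image_of_mem F hy)
        (Set.mem_image_of_mem F hzΩ) hgt hFz
      rw [hg z hzΩ, hg x hx, hg y hy] at hsl
      have : (slope F x z)⁻¹ = (z - x) / (F z - F x) := by
        rw [slope_def_field, inv_div]
      rw [this]
      exact hsl
    have h1 : (F x - F y) * ((x - y) / (F x - F y)) ≤ (F x - F y) * (Fd x)⁻¹ :=
      mul_le_mul_of_nonneg_left hA (by linarith)
    rw [mul_div_cancel₀ _ (by linarith : F x - F y ≠ 0)] at h1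
    have h2 : (F y - F x) * (Fd x)⁻¹ = -((F x - F y) * (Fd x)⁻¹) := by ring
    rw [div_eq_mul_inv, h2]
    linarith

private lemma sum_upper {ι : Type*} [Fintype ι] [Nonempty ι] (w d : ι → ℝ) (c : ℝ)
    (hw : ∀ i, 0 < w i) (h : ∑ i, (c - d i) / w i ≤ 0) :
    c ≤ (∑ i, 1 / w i)⁻¹ * ∑ i, d i / w i := by
  have hS : 0 < ∑ i, 1 / w i :=
    Finset.sum_pos (fun i _ => by have := hw i; positivity) Finset.univ_nonempty
  rw [inv_mul_eq_div, le_div_iff₀ hS]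
  have he : ∑ i, (c - d i) / w i = c * ∑ i, 1 / w i - ∑ i, d i / w i := by
    rw [Finset.mul_sum, ← Finset.sum_sub_distrib]
    refine Finset.sum_congr rfl fun i _ => ?_
    rw [sub_div, mul_one_div]
  linarith [he ▸ h]

private lemma sum_lower {ι : Type*} [Fintype ι] [Nonempty ι] (w d : ι → ℝ) (c : ℝ)
    (hw : ∀ i, 0 < w i) (h : ∑ i, (d i - c) / w i ≤ 0) :
    (∑ i, 1 / w i)⁻¹ * ∑ i, d i / w i ≤ c := by
  have hS : 0 < ∑ i, 1 / w i :=
    Finset.sum_pos (fun i _ => by have := hw i; positivity) Finset.univ_nonempty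
  rw [inv_mul_eq_div, div_le_iff₀ hS]
  have he : ∑ i, (d i - c) / w i = ∑ i, d i / w i - c * ∑ i, 1 / w i := by
    rw [Finset.mul_sum, ← Finset.sum_sub_distrib]
    refine Finset.sum_congr rfl fun i _ => ?_
    rw [sub_div, mul_one_div]
  linarith [he ▸ h]

/-- Lemma C.5 (`lemma_21_gen_ext`): Lagrange-multiplier bounds for hybrid regularizers. -/
theorem lagrange_multiplier_bounds_hybrid {ι : Type*} [Fintype ι] [Nonempty ι]
    (Ω : Set ℝ) (hΩopen : IsOpen Ω) (hΩconv : Convex ℝ Ω)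
    (θ : ℝ) (hθ : 0 < θ)
    (ψ ψ' ψ'' r r' r'' : ℝ → ℝ)
    (hψ : ∀ u ∈ Ω, HasDerivAt ψ (ψ' u) u)
    (hψ' : ∀ u ∈ Ω, HasDerivAt ψ' (ψ'' u) u)
    (hr : ∀ u ∈ Ω, HasDerivAt r (r' u) u)
    (hr' : ∀ u ∈ Ω, HasDerivAt r' (r'' u) u)
    (hψ''pos : ∀ u ∈ Ω, 0 < ψ'' u)
    (hr''pos : ∀ u ∈ Ω, 0 < r'' u)
    (γ γ' : ι → ℝ) (hγ : ∀ i, 0 < γ i) (hγ' : ∀ i, 0 < γ' i)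
    (hinv : ∀ i, ∀ a ∈ ({γ i, γ' i} : Set ℝ),
      StrictMonoOn (fun u => a * ψ' u + θ * r' u) Ω ∧
      ∃ inv : ℝ → ℝ,
        (∀ u ∈ Ω, inv (a * ψ' u + θ * r' u) = u) ∧
        DifferentiableOn ℝ inv ((fun u => a * ψ' u + θ * r' u) '' Ω) ∧
        ConvexOn ℝ ((fun u => a * ψ' u + θ * r' u) '' Ω) inv)
    (ℓ : ι → ℝ) (c : ℝ) (p q : ι → ℝ)
    (hp : ∀ i, p i ∈ Ω) (hq : ∀ i, q i ∈ Ω)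
    (hkkt : ∀ i, γ' i * ψ' (q i) + θ * r' (q i)
        = γ i * ψ' (p i) + θ * r' (p i) - ℓ i + c)
    (hsum : ∑ i, p i = ∑ i, q i) :
    c ≤ (∑ i, 1 / (γ' i * ψ'' (p i) + θ * r'' (p i)))⁻¹ *
        (∑ i, ((γ' i - γ i) * ψ' (p i) + ℓ i) / (γ' i * ψ'' (p i) + θ * r'' (p i))) ∧
    (∑ i, 1 / (γ i * ψ'' (q i) + θ * r'' (q i)))⁻¹ *
        (∑ i, ((γ' i - γ i) * ψ' (q i) + ℓ i) / (γ i * ψ'' (q i) + θ * r'' (q i))) ≤ c ∧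
    c ≤ (∑ i, 1 / (γ i * ψ'' (p i) + θ * r'' (p i)))⁻¹ *
        (∑ i, ((γ' i - γ i) * ψ' (q i) + ℓ i) / (γ i * ψ'' (p i) + θ * r'' (p i))) ∧
    (∑ i, 1 / (γ' i * ψ'' (q i) + θ * r'' (q i)))⁻¹ *
        (∑ i, ((γ' i - γ i) * ψ' (p i) + ℓ i) / (γ' i * ψ'' (q i) + θ * r'' (q i))) ≤ c := by
  -- the master tangent-line inequality for each index and multiplier
  have key_at : ∀ i, ∀ a ∈ ({γ i, γ' i} : Set ℝ), 0 < a → ∀ x ∈ Ω, ∀ y ∈ Ω,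
      ((a * ψ' y + θ * r' y) - (a * ψ' x + θ * r' x)) / (a * ψ'' x + θ * r'' x) ≤ y - x := by
    intro i a ha hapos x hx y hy
    obtain ⟨hmono, g, hg, _, hgconv⟩ := hinv i a ha
    exact key_tangent hΩopen
      (fun u hu => ((hψ' u hu).const_mul a).add ((hr' u hu).const_mul θ))
      (fun u hu => add_pos (mul_pos hapos (hψ''pos u hu)) (mul_pos hθ (hr''pos u hu)))
      hmono hg hgconv hx hy
  have hγmem : ∀ i, γ i ∈ ({γ i, γ' i} : Set ℝ) := fun i => Or.inl rfl
  have hγ'mem : ∀ i, γ' i ∈ ({γ i, γ' i} : Set ℝ) := fun i => Or.inr rfl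
  have hsumqp : ∑ i, (q i - p i) = 0 := by
    rw [Finset.sum_sub_distrib, hsum, sub_self]
  have hsumpq : ∑ i, (p i - q i) = 0 := by
    rw [Finset.sum_sub_distrib, hsum, sub_self]
  refine ⟨?_, ?_, ?_, ?_⟩
  · -- bound (1)
    refine sum_upper (fun i => γ' i * ψ'' (p i) + θ * r'' (p i))
      (fun i => (γ' i - γ i) * ψ' (p i) + ℓ i) c
      (fun i => add_pos (mul_pos (hγ' i) (hψ''pos _ (hp i))) (mul_pos hθ (hr''pos _ (hp i)))) ?_
    calc ∑ i, (c - ((γ' i - γ i) * ψ' (p i) + ℓ i)) / (γ' i * ψ'' (p i) + θ * r'' (p i))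
        ≤ ∑ i, (q i - p i) := by
          refine Finset.sum_le_sum fun i _ => ?_
          have h := key_at i (γ' i) (hγ'mem i) (hγ' i) (p i) (hp i) (q i) (hq i)
          have e : (γ' i * ψ' (q i) + θ * r' (q i)) - (γ' i * ψ' (p i) + θ * r' (p i))
              = c - ((γ' i - γ i) * ψ' (p i) + ℓ i) := by linear_combination hkkt i
          rwa [e] at h
      _ = 0 := hsumqp
  · -- bound (2)
    refine sum_lower (fun i => γ i * ψ'' (q i) + θ * r'' (q i))
      (fun i => (γ' i - γ i) * ψ' (q i) + ℓ i) c
      (fun i => add_pos (mul_pos (hγ i) (hψ''pos _ (hq i))) (mul_pos hθ (hr''pos _ (hq i)))) ?_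
    calc ∑ i, (((γ' i - γ i) * ψ' (q i) + ℓ i) - c) / (γ i * ψ'' (q i) + θ * r'' (q i))
        ≤ ∑ i, (p i - q i) := by
          refine Finset.sum_le_sum fun i _ => ?_
          have h := key_at i (γ i) (hγmem i) (hγ i) (q i) (hq i) (p i) (hp i)
          have e : (γ i * ψ' (p i) + θ * r' (p i)) - (γ i * ψ' (q i) + θ * r' (q i))
              = ((γ' i - γ i) * ψ' (q i) + ℓ i) - c := by linear_combination -(hkkt i)
          rwa [e] at h
      _ = 0 := hsumpq
  · -- bound (3)
    refine sum_upper (fun i => γ i * ψ'' (p i) + θ * r'' (p i))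
      (fun i => (γ' i - γ i) * ψ' (q i) + ℓ i) c
      (fun i => add_pos (mul_pos (hγ i) (hψ''pos _ (hp i))) (mul_pos hθ (hr''pos _ (hp i)))) ?_
    calc ∑ i, (c - ((γ' i - γ i) * ψ' (q i) + ℓ i)) / (γ i * ψ'' (p i) + θ * r'' (p i))
        ≤ ∑ i, (q i - p i) := by
          refine Finset.sum_le_sum fun i _ => ?_
          have h := key_at i (γ i) (hγmem i) (hγ i) (p i) (hp i) (q i) (hq i)
          have e : (γ i * ψ' (q i) + θ * r' (q i)) - (γ i * ψ' (p i) + θ * r' (p i))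
              = c - ((γ' i - γ i) * ψ' (q i) + ℓ i) := by linear_combination hkkt i
          rwa [e] at h
      _ = 0 := hsumqp
  · -- bound (4)
    refine sum_lower (fun i => γ' i * ψ'' (q i) + θ * r'' (q i))
      (fun i => (γ' i - γ i) * ψ' (p i) + ℓ i) c
      (fun i => add_pos (mul_pos (hγ' i) (hψ''pos _ (hq i))) (mul_pos hθ (hr''pos _ (hq i)))) ?_
    calc ∑ i, (((γ' i - γ i) * ψ' (p i) + ℓ i) - c) / (γ' i * ψ'' (q i) + θ * r'' (q i))
        ≤ ∑ i, (p i - q i) := by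
          refine Finset.sum_le_sum fun i _ => ?_
          have h := key_at i (γ' i) (hγ'mem i) (hγ' i) (q i) (hq i) (p i) (hp i)
          have e : (γ' i * ψ' (p i) + θ * r' (p i)) - (γ' i * ψ' (q i) + θ * r' (q i))
              = ((γ' i - γ i) * ψ' (p i) + ℓ i) - c := by linear_combination -(hkkt i)
          rwa [e] at h
      _ = 0 := hsumpq
end

section
/- Let K ≥ 1, let Δ_K = {x ∈ ℝ^K : x_i ≥ 0 for all i, ∑_i x_i = 1} be the probability simplex, let L, ℓ ∈ ℝ^K, and let φ be a differentiable strictly convex function on an open set containing Δ_K ∩ (0,∞)^K. Suppose p minimizes x ↦ ⟨x, L⟩ + φ(x) over Δ_K and q minimizes x ↦ ⟨x, L + ℓ⟩ + φ(x) over Δ_K, with p, q having strictly positive coordinates, and suppose ∇φ(p) = −L + c·𝟙 for some c ∈ ℝ (where 𝟙 is the all-ones vector). Then for every z ∈ Δ_K: ⟨p − z, ℓ⟩ − D(z, p) ≤ ⟨p − q, ℓ⟩ − D(q, p), where D(x, y) = φ(x) − φ(y) − ⟨∇φ(y), x − y⟩ is the Bregman divergence of φ. -/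
/-- First claim of Lemma C.8 (`app_breg_analysis_opt_and_interm`). -/
theorem ftrl_stability_maximizer
    (K : ℕ) (hK : 1 ≤ K)
    (L ℓ : Fin K → ℝ)
    (S : Set (Fin K → ℝ)) (hSopen : IsOpen S)
    (hSsub : ∀ x : Fin K → ℝ,
      ((∀ i, 0 ≤ x i) ∧ ∑ i, x i = 1) → (∀ i, 0 < x i) → x ∈ S)
    (φ : (Fin K → ℝ) → ℝ) (gradφ : (Fin K → ℝ) → Fin K → ℝ)
    (hφdiff : ∀ x ∈ S, HasFDerivAt φ
      (∑ i, gradφ x i • (ContinuousLinearMap.proj i : (Fin K → ℝ) →L[ℝ] ℝ)) x)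
    (hφconv : StrictConvexOn ℝ S φ)
    (p q : Fin K → ℝ) (c : ℝ)
    (hppos : ∀ i, 0 < p i) (hpsum : ∑ i, p i = 1)
    (hqpos : ∀ i, 0 < q i) (hqsum : ∑ i, q i = 1)
    (hpmin : ∀ x : Fin K → ℝ, (∀ i, 0 ≤ x i) → ∑ i, x i = 1 →
      (∑ i, p i * L i) + φ p ≤ (∑ i, x i * L i) + φ x)
    (hqmin : ∀ x : Fin K → ℝ, (∀ i, 0 ≤ x i) → ∑ i, x i = 1 →
      (∑ i, q i * (L i + ℓ i)) + φ q ≤ (∑ i, x i * (L i + ℓ i)) + φ x)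
    (hgradp : ∀ i, gradφ p i = -L i + c) :
    ∀ z : Fin K → ℝ, (∀ i, 0 ≤ z i) → ∑ i, z i = 1 →
      (∑ i, (p i - z i) * ℓ i) -
          (φ z - φ p - ∑ i, gradφ p i * (z i - p i))
        ≤ (∑ i, (p i - q i) * ℓ i) -
          (φ q - φ p - ∑ i, gradφ p i * (q i - p i)) := by
  have key : ∀ x : Fin K → ℝ, ∑ i, x i = 1 →
      ∑ i, gradφ p i * (x i - p i) = (∑ i, p i * L i) - ∑ i, x i * L i := by
    intro x hx
    have : ∑ i, gradφ p i * (x i - p i)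
        = ∑ i, ((p i * L i - x i * L i) + c * (x i - p i)) :=
      Finset.sum_congr rfl fun i _ => by rw [hgradp i]; ring
    rw [this, Finset.sum_add_distrib, Finset.sum_sub_distrib, ← Finset.mul_sum,
      Finset.sum_sub_distrib, hx, hpsum]; ring
  intro z hz0 hz1
  have h := hqmin z hz0 hz1
  have hsumz : ∑ i, z i * (L i + ℓ i) = (∑ i, z i * L i) + ∑ i, z i * ℓ i := by
    rw [← Finset.sum_add_distrib]; exact Finset.sum_congr rfl fun i _ => by ring
  have hsumq : ∑ i, q i * (L i + ℓ i) = (∑ i, q i * L i) + ∑ i, q i * ℓ i := by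
    rw [← Finset.sum_add_distrib]; exact Finset.sum_congr rfl fun i _ => by ring
  have hpz : ∑ i, (p i - z i) * ℓ i = (∑ i, p i * ℓ i) - ∑ i, z i * ℓ i := by
    rw [← Finset.sum_sub_distrib]; exact Finset.sum_congr rfl fun i _ => by ring
  have hpq : ∑ i, (p i - q i) * ℓ i = (∑ i, p i * ℓ i) - ∑ i, q i * ℓ i := by
    rw [← Finset.sum_sub_distrib]; exact Finset.sum_congr rfl fun i _ => by ring
  rw [key z hz1, key q hqsum, hpz, hpq]
  rw [hsumz, hsumq] at h
  linarith
end

section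
/- Let K ≥ 1, Δ_K ⊂ ℝ^K the probability simplex, L, ℓ ∈ ℝ^K, and let φ be a twice continuously differentiable strictly convex function, with positive-definite Hessian, on an open convex set containing the segment between p and q, where p minimizes x ↦ ⟨x, L⟩ + φ(x) over Δ_K and q minimizes x ↦ ⟨x, L + ℓ⟩ + φ(x) over Δ_K (both with strictly positive coordinates), and ∇φ(p) = −L + c·𝟙 for some c ∈ ℝ. Then there exists η ∈ [0,1] such that, with ξ = η·p + (1−η)·q, one has ⟨p − q, ℓ⟩ − D(q, p) ≤ 2·ℓᵀ (∇²φ(ξ))^{−1} ℓ, where D(x, y) = φ(x) − φ(y) − ⟨∇φ(y), x − y⟩. -/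
/-!
Along the segment, `t ↦ φ (p + t (q - p))` has derivative `⟨∇φ, q - p⟩` and second derivative
`(q - p)ᵀ ∇²φ (q - p)`, so Taylor's theorem with Lagrange remainder writes the Bregman divergence
`D(q, p)` as `½ ‖q - p‖²_{∇²φ(ξ)}` for some `ξ` on the segment. The generalized Young inequality
`⟨w, ℓ⟩ ≤ ½ ‖w‖²_H + ½ ‖ℓ‖²_{H⁻¹}`, valid for every positive definite `H`, then gives
`⟨p - q, ℓ⟩ - D(q, p) ≤ ½ ‖ℓ‖²_{∇²φ(ξ)⁻¹}`, which is at most twice that norm.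
-/

open Matrix Set

theorem exists_taylor_two_lagrange {g g' g'' : ℝ → ℝ} {a b : ℝ} (hab : a < b)
    (hg : ∀ t ∈ Icc a b, HasDerivAt g (g' t) t) (hg' : ∀ t ∈ Icc a b, HasDerivAt g' (g'' t) t) :
    ∃ t ∈ Ioo a b, g b - g a - g' a * (b - a) = g'' t / 2 * (b - a) ^ 2 := by
  -- Cauchy's mean value theorem against `(s - a) ^ 2`, then Lagrange's for `g'` on `[a, c]`.
  obtain ⟨c, ⟨hac, hcb⟩, hc⟩ := exists_ratio_hasDerivAt_eq_ratio_slope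
    (fun s => g s - g a - g' a * (s - a)) (fun s => g' s - g' a) hab
    (fun s hs => ((hg s hs).continuousAt.sub continuousAt_const).sub
      (continuousAt_const.mul (continuousAt_id.sub continuousAt_const)) |>.continuousWithinAt)
    (fun s hs => by
      simpa using (((hg s (Ioo_subset_Icc_self hs)).sub_const (g a)).fun_sub
        (((hasDerivAt_id s).sub_const a).const_mul (g' a))))
    (fun s => (s - a) ^ 2) (fun s => 2 * (s - a)) (by fun_prop)
    (fun s _ => by simpa using ((hasDerivAt_id s).sub_const a).fun_pow 2)
  have hIcc : Icc a c ⊆ Icc a b := Icc_subset_Icc_right hcb.le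
  obtain ⟨d, ⟨had, hdc⟩, hd⟩ := exists_hasDerivAt_eq_slope g' g'' hac
    (fun s hs => (hg' s (hIcc hs)).continuousAt.continuousWithinAt)
    (fun s hs => hg' s (hIcc (Ioo_subset_Icc_self hs)))
  refine ⟨d, ⟨had, hdc.trans hcb⟩, ?_⟩
  have hca : c - a ≠ 0 := sub_ne_zero.2 hac.ne'
  rw [eq_div_iff hca] at hd
  apply mul_right_cancel₀ hca
  linear_combination (-hc - (b - a) ^ 2 * hd) / 2

theorem Matrix.PosDef.dotProduct_le_half_add_half_inv {n : Type*} [Fintype n] [DecidableEq n]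
    {H : Matrix n n ℝ} (hH : H.PosDef) (w l : n → ℝ) :
    w ⬝ᵥ l ≤ w ⬝ᵥ (H *ᵥ w) / 2 + l ⬝ᵥ (H⁻¹ *ᵥ l) / 2 := by
  set z := H⁻¹ *ᵥ l
  have hHz : H *ᵥ z = l := by
    rw [mulVec_mulVec, mul_nonsing_inv H hH.det_pos.ne'.isUnit, one_mulVec]
  have hsymm : z ⬝ᵥ (H *ᵥ w) = w ⬝ᵥ l := by
    have hT : Hᵀ = H := hH.isHermitian
    rw [dotProduct_mulVec, ← mulVec_transpose, hT, hHz, dotProduct_comm]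
  have hsq : 0 ≤ (w - z) ⬝ᵥ (H *ᵥ (w - z)) := by
    simpa using hH.posSemidef.dotProduct_mulVec_nonneg (w - z)
  rw [mulVec_sub, sub_dotProduct, dotProduct_sub, dotProduct_sub, hHz, hsymm,
    dotProduct_comm z l] at hsq
  linarith

theorem HasFDerivAt.hasDerivAt_comp_lineMap {ι : Type*} [Fintype ι] {f : (ι → ℝ) → ℝ}
    {g x y : ι → ℝ} {t : ℝ}
    (hf : HasFDerivAt f (∑ i, g i • (ContinuousLinearMap.proj i : (ι → ℝ) →L[ℝ] ℝ))
      (AffineMap.lineMap x y t)) :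
    HasDerivAt (fun s => f (AffineMap.lineMap x y s)) (g ⬝ᵥ (y - x)) t := by
  have hcomp := hf.comp_hasDerivAt t AffineMap.hasDerivAt_lineMap
  simp only [_root_.sum_apply, _root_.smul_apply, ContinuousLinearMap.proj_apply,
    smul_eq_mul] at hcomp
  exact hcomp

theorem exists_bregman_eq_half_hessian {ι : Type*} [Fintype ι] {S : Set (ι → ℝ)}
    {φ : (ι → ℝ) → ℝ} {gradφ : (ι → ℝ) → ι → ℝ} {hess : (ι → ℝ) → Matrix ι ι ℝ}
    (hφ : ∀ x ∈ S, HasFDerivAt φ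
      (∑ i, gradφ x i • (ContinuousLinearMap.proj i : (ι → ℝ) →L[ℝ] ℝ)) x)
    (hgrad : ∀ x ∈ S, ∀ i, HasFDerivAt (fun y => gradφ y i)
      (∑ j, hess x i j • (ContinuousLinearMap.proj j : (ι → ℝ) →L[ℝ] ℝ)) x)
    {p q : ι → ℝ} (hseg : segment ℝ p q ⊆ S) :
    ∃ t ∈ Icc (0 : ℝ) 1, φ q - φ p - gradφ p ⬝ᵥ (q - p) =
      (q - p) ⬝ᵥ (hess (AffineMap.lineMap p q t) *ᵥ (q - p)) / 2 := by
  have hmem : ∀ t ∈ Icc (0 : ℝ) 1, AffineMap.lineMap p q t ∈ S := fun t ht =>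
    hseg (lineMap_mem_segment ℝ p q ht)
  obtain ⟨t, ht, hT⟩ := exists_taylor_two_lagrange zero_lt_one
    (g := fun s => φ (AffineMap.lineMap p q s))
    (g' := fun s => gradφ (AffineMap.lineMap p q s) ⬝ᵥ (q - p))
    (g'' := fun s => (hess (AffineMap.lineMap p q s) *ᵥ (q - p)) ⬝ᵥ (q - p))
    (fun s hs => (hφ _ (hmem s hs)).hasDerivAt_comp_lineMap)
    (fun s hs => HasDerivAt.fun_sum fun i _ =>
        ((hgrad _ (hmem s hs) i).hasDerivAt_comp_lineMap).mul_const _)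
  refine ⟨t, Ioo_subset_Icc_self ht, ?_⟩
  simpa [dotProduct_comm (q - p)] using hT

theorem ftrl_stability_local_norm_bound_general
    (K : ℕ)
    (L ℓ : Fin K → ℝ)
    (S : Set (Fin K → ℝ))
    (φ : (Fin K → ℝ) → ℝ) (gradφ : (Fin K → ℝ) → Fin K → ℝ)
    (hess : (Fin K → ℝ) → Matrix (Fin K) (Fin K) ℝ)
    (hφdiff : ∀ x ∈ S, HasFDerivAt φ
      (∑ i, gradφ x i • (ContinuousLinearMap.proj i : (Fin K → ℝ) →L[ℝ] ℝ)) x)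
    (hgraddiff : ∀ x ∈ S, ∀ i, HasFDerivAt (fun y => gradφ y i)
      (∑ j, hess x i j • (ContinuousLinearMap.proj j : (Fin K → ℝ) →L[ℝ] ℝ)) x)
    (hhesspd : ∀ x ∈ S, (hess x).PosDef)
    (p q : Fin K → ℝ)
    (hseg : segment ℝ p q ⊆ S) :
    ∃ η ∈ Set.Icc (0 : ℝ) 1,
      (∑ i, (p i - q i) * ℓ i) -
          (φ q - φ p - ∑ i, gradφ p i * (q i - p i))
        ≤ 2 * (ℓ ⬝ᵥ ((hess (η • p + (1 - η) • q))⁻¹ *ᵥ ℓ)) := by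
  obtain ⟨t, ht, hbreg⟩ := exists_bregman_eq_half_hessian hφdiff hgraddiff hseg
  refine ⟨1 - t, ⟨by linarith [ht.2], by linarith [ht.1]⟩, ?_⟩
  rw [sub_sub_cancel, ← AffineMap.lineMap_apply_module]
  have hH := hhesspd _ (hseg (lineMap_mem_segment ℝ p q ht))
  have hyoung := hH.dotProduct_le_half_add_half_inv (q - p) (-ℓ)
  simp only [mulVec_neg, dotProduct_neg, neg_dotProduct, neg_neg] at hyoung
  have hdual : 0 ≤ ℓ ⬝ᵥ ((hess (AffineMap.lineMap p q t))⁻¹ *ᵥ ℓ) := by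
    simpa using hH.inv.posSemidef.dotProduct_mulVec_nonneg ℓ
  change (p - q) ⬝ᵥ ℓ - (φ q - φ p - gradφ p ⬝ᵥ (q - p)) ≤ _
  rw [hbreg, ← neg_sub q p, neg_dotProduct]
  linarith

/-- Second claim of Lemma C.8 (`app_breg_analysis_opt_and_interm`). -/
theorem ftrl_stability_local_norm_bound
    (K : ℕ) (hK : 1 ≤ K)
    (L ℓ : Fin K → ℝ)
    (S : Set (Fin K → ℝ)) (hSopen : IsOpen S) (hSconv : Convex ℝ S)
    (φ : (Fin K → ℝ) → ℝ) (gradφ : (Fin K → ℝ) → Fin K → ℝ)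
    (hess : (Fin K → ℝ) → Matrix (Fin K) (Fin K) ℝ)
    (hφdiff : ∀ x ∈ S, HasFDerivAt φ
      (∑ i, gradφ x i • (ContinuousLinearMap.proj i : (Fin K → ℝ) →L[ℝ] ℝ)) x)
    (hgraddiff : ∀ x ∈ S, ∀ i, HasFDerivAt (fun y => gradφ y i)
      (∑ j, hess x i j • (ContinuousLinearMap.proj j : (Fin K → ℝ) →L[ℝ] ℝ)) x)
    (hhesscont : ContinuousOn hess S)
    (hφconv : StrictConvexOn ℝ S φ)
    (hhesspd : ∀ x ∈ S, (hess x).PosDef)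
    (p q : Fin K → ℝ) (c : ℝ)
    (hseg : segment ℝ p q ⊆ S)
    (hppos : ∀ i, 0 < p i) (hpsum : ∑ i, p i = 1)
    (hqpos : ∀ i, 0 < q i) (hqsum : ∑ i, q i = 1)
    (hpmin : ∀ x : Fin K → ℝ, (∀ i, 0 ≤ x i) → ∑ i, x i = 1 →
      (∑ i, p i * L i) + φ p ≤ (∑ i, x i * L i) + φ x)
    (hqmin : ∀ x : Fin K → ℝ, (∀ i, 0 ≤ x i) → ∑ i, x i = 1 →
      (∑ i, q i * (L i + ℓ i)) + φ q ≤ (∑ i, x i * (L i + ℓ i)) + φ x)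
    (hgradp : ∀ i, gradφ p i = -L i + c) :
    ∃ η ∈ Set.Icc (0 : ℝ) 1,
      (∑ i, (p i - q i) * ℓ i) -
          (φ q - φ p - ∑ i, gradφ p i * (q i - p i))
        ≤ 2 * (ℓ ⬝ᵥ ((hess (η • p + (1 - η) • q))⁻¹ *ᵥ ℓ)) :=
  ftrl_stability_local_norm_bound_general K L ℓ S φ gradφ hess hφdiff hgraddiff hhesspd p q hseg
end

section
/- Let t ≥ 1 and K ≥ 1 be integers, I ⊆ [K] an index set with |I| ≥ 1, and let x, y ∈ (0,1]^K, c ∈ ℝ, and ℓ ∈ [0,∞)^K with ℓ_i = 0 for all i ∈ [K] except possibly one index. Suppose ∑_{i∈I} x_i = ∑_{i∈I} y_i and, for every i ∈ I, 3·K^{1/6}·√(t+1)·y_i^{−1/3} = 3·K^{1/6}·√t·x_i^{−1/3} + ℓ_i − c. Then ∑_{i∈I} y_i^{4/3} ≤ 2·(1 + 1/t)²·∑_{i∈I} x_i^{4/3} ≤ 8·∑_{i∈I} x_i^{4/3}. -/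
/-!
If `c ≤ 0`, the KKT equation gives `√t · x_i^{-1/3} ≤ √(t+1) · y_i^{-1/3}` on every
coordinate, hence `y_i^{4/3} ≤ (1 + 1/t)^2 x_i^{4/3}` coordinatewise. If `c > 0`, every
coordinate except the one carrying the loss strictly grows, so by conservation of mass on `I`
the loss coordinate `j` pays for all the growth: `∑_{i ≠ j} (y_i - x_i) = x_j - y_j`. With
`p = 4/3`, the power-mean bound `(a + b)^p ≤ 2^{p-1} (a^p + b^p)` applied to
`y_i = x_i + (y_i - x_i)` and superadditivity of `u ↦ u^p` then give
`∑ y_i^p ≤ 2^{p-1} ∑ x_i^p`.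
-/

open Finset Real

namespace Real

lemma rpow_add_le_mul_rpow_add_rpow {a b p : ℝ} (ha : 0 ≤ a) (hb : 0 ≤ b) (hp : 1 ≤ p) :
    (a + b) ^ p ≤ 2 ^ (p - 1) * (a ^ p + b ^ p) := by
  lift a to NNReal using ha
  lift b to NNReal using hb
  exact_mod_cast NNReal.rpow_add_le_mul_rpow_add_rpow a b hp

lemma sum_rpow_le_rpow_sum {ι : Type*} {s : Finset ι} {f : ι → ℝ} {p : ℝ} (hp : 1 ≤ p)
    (hf : ∀ i ∈ s, 0 ≤ f i) : ∑ i ∈ s, f i ^ p ≤ (∑ i ∈ s, f i) ^ p := by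
  induction s using Finset.cons_induction with
  | empty => simp [zero_rpow (by linarith : p ≠ 0)]
  | cons a s ha ih =>
    rw [sum_cons, sum_cons]
    have hs : ∀ i ∈ s, 0 ≤ f i := fun i hi => hf i (mem_cons_of_mem hi)
    calc f a ^ p + ∑ i ∈ s, f i ^ p ≤ f a ^ p + (∑ i ∈ s, f i) ^ p := by
          gcongr; exact ih hs
      _ ≤ (f a + ∑ i ∈ s, f i) ^ p :=
        add_rpow_le_rpow_add (hf a (mem_cons_self a s)) (sum_nonneg hs) hp

lemma mul_rpow_le_of_mul_rpow_neg_le {a b x y r : ℝ} (hx : 0 < x) (hy : 0 < y)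
    (h : a * x ^ (-r) ≤ b * y ^ (-r)) : a * y ^ r ≤ b * x ^ r := by
  rw [rpow_neg hx.le, rpow_neg hy.le, ← div_eq_mul_inv, ← div_eq_mul_inv,
    div_le_div_iff₀ (rpow_pos_of_pos hx r) (rpow_pos_of_pos hy r)] at h
  exact h

lemma rpow_le_of_mul_rpow_neg_le {a b x y r q : ℝ} (ha : 0 < a) (hb : 0 ≤ b) (hx : 0 < x)
    (hy : 0 < y) (hr : 0 < r) (hq : 0 ≤ q) (h : a * x ^ (-r) ≤ b * y ^ (-r)) :
    y ^ q ≤ (b / a) ^ (q / r) * x ^ q := by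
  have hyr : y ^ r ≤ b / a * x ^ r := by
    rw [div_mul_eq_mul_div, le_div_iff₀ ha, mul_comm]
    exact mul_rpow_le_of_mul_rpow_neg_le hx hy h
  calc y ^ q = (y ^ r) ^ (q / r) := by rw [← rpow_mul hy.le, mul_div_cancel₀ q hr.ne']
    _ ≤ (b / a * x ^ r) ^ (q / r) := by gcongr
    _ = (b / a) ^ (q / r) * x ^ q := by
      rw [mul_rpow (by positivity) (by positivity), ← rpow_mul hx.le, mul_div_cancel₀ q hr.ne']

lemma lt_of_mul_rpow_neg_lt {a b x y r : ℝ} (hb : 0 < b) (hab : a ≤ b) (hx : 0 < x)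
    (hy : 0 < y) (hr : 0 < r) (h : b * y ^ (-r) < a * x ^ (-r)) : x < y := by
  have hxy : b * y ^ (-r) < b * x ^ (-r) :=
    h.trans_le (mul_le_mul_of_nonneg_right hab (rpow_nonneg hx.le _))
  exact (rpow_lt_rpow_iff_of_neg hy hx (neg_neg_of_pos hr)).1 (lt_of_mul_lt_mul_left hxy hb.le)

end Real

theorem sum_rpow_le_two_rpow_mul_sum_rpow_of_sum_eq {ι : Type*} [DecidableEq ι] {s : Finset ι}
    {x y : ι → ℝ} {p : ℝ} {j : ι} (hp : 1 ≤ p) (hj : j ∈ s)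
    (hx : ∀ i ∈ s, 0 ≤ x i) (hy : ∀ i ∈ s, 0 ≤ y i)
    (hle : ∀ i ∈ s, i ≠ j → x i ≤ y i) (hsum : ∑ i ∈ s, x i = ∑ i ∈ s, y i) :
    ∑ i ∈ s, y i ^ p ≤ 2 ^ (p - 1) * ∑ i ∈ s, x i ^ p := by
  set C : ℝ := 2 ^ (p - 1)
  have hC : 1 ≤ C := one_le_rpow (by norm_num) (by linarith)
  have hle' : ∀ i ∈ s.erase j, x i ≤ y i := fun i hi =>
    hle i (mem_of_mem_erase hi) (ne_of_mem_erase hi)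
  set d := x j - y j
  have hd : ∑ i ∈ s.erase j, (y i - x i) = d := by
    rw [sum_sub_distrib]
    linarith [add_sum_erase s x hj, add_sum_erase s y hj]
  have hd₀ : 0 ≤ d := hd ▸ sum_nonneg fun i hi => sub_nonneg.2 (hle' i hi)
  have hrest : ∑ i ∈ s.erase j, y i ^ p ≤ C * (∑ i ∈ s.erase j, x i ^ p + d ^ p) := calc
    ∑ i ∈ s.erase j, y i ^ p = ∑ i ∈ s.erase j, (x i + (y i - x i)) ^ p := by simp
    _ ≤ ∑ i ∈ s.erase j, C * (x i ^ p + (y i - x i) ^ p) := by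
      gcongr with i hi
      exact rpow_add_le_mul_rpow_add_rpow (hx i (mem_of_mem_erase hi))
        (sub_nonneg.2 (hle' i hi)) hp
    _ = C * (∑ i ∈ s.erase j, x i ^ p + ∑ i ∈ s.erase j, (y i - x i) ^ p) := by
      rw [← mul_sum, sum_add_distrib]
    _ ≤ C * (∑ i ∈ s.erase j, x i ^ p + d ^ p) := by
      gcongr
      exact hd ▸ sum_rpow_le_rpow_sum hp fun i hi => sub_nonneg.2 (hle' i hi)
  have hpivot : y j ^ p + C * d ^ p ≤ C * x j ^ p := calc
    y j ^ p + C * d ^ p ≤ C * (y j ^ p + d ^ p) := by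
      nlinarith [rpow_nonneg (hy j hj) p]
    _ ≤ C * x j ^ p := by
      gcongr
      simpa [d] using add_rpow_le_rpow_add (hy j hj) hd₀ hp
  rw [← add_sum_erase s _ hj, ← add_sum_erase s (fun i => x i ^ p) hj]
  linarith

/-- Lemma D.1 (`group_multiplicative_relation`) for the 2/3-Tsallis entropy. -/
theorem group_multiplicative_relation
    (t K : ℕ) (ht : 1 ≤ t) (hK : 1 ≤ K)
    (I : Finset (Fin K)) (hI : I.Nonempty)
    (x y : Fin K → ℝ)
    (hx : ∀ i, x i ∈ Set.Ioc (0 : ℝ) 1) (hy : ∀ i, y i ∈ Set.Ioc (0 : ℝ) 1)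
    (c : ℝ) (ℓ : Fin K → ℝ) (hℓ : ∀ i, 0 ≤ ℓ i)
    (hsupp : ∃ i₀ : Fin K, ∀ i, i ≠ i₀ → ℓ i = 0)
    (hsum : ∑ i ∈ I, x i = ∑ i ∈ I, y i)
    (hkkt : ∀ i ∈ I,
      3 * (K : ℝ) ^ ((1 : ℝ) / 6) * Real.sqrt ((t : ℝ) + 1) * (y i) ^ (-(1 : ℝ) / 3)
        = 3 * (K : ℝ) ^ ((1 : ℝ) / 6) * Real.sqrt (t : ℝ) * (x i) ^ (-(1 : ℝ) / 3)
          + ℓ i - c) :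
    ∑ i ∈ I, (y i) ^ ((4 : ℝ) / 3)
        ≤ 2 * (1 + 1 / (t : ℝ)) ^ 2 * ∑ i ∈ I, (x i) ^ ((4 : ℝ) / 3) ∧
    2 * (1 + 1 / (t : ℝ)) ^ 2 * ∑ i ∈ I, (x i) ^ ((4 : ℝ) / 3)
        ≤ 8 * ∑ i ∈ I, (x i) ^ ((4 : ℝ) / 3) := by
  simp only [neg_div] at hkkt
  obtain ⟨i₀, hi₀⟩ := hsupp
  set γ : ℝ := 3 * (K : ℝ) ^ ((1 : ℝ) / 6)
  have ht₀ : (0 : ℝ) < t := by exact_mod_cast ht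
  have hγ : 0 < γ := mul_pos three_pos (rpow_pos_of_pos (by exact_mod_cast hK) _)
  have hrate : γ * √t ≤ γ * √(t + 1) := by gcongr; linarith
  have hratio :
      (γ * √(t + 1) / (γ * √t)) ^ ((4 : ℝ) / 3 / (1 / 3)) = (1 + 1 / (t : ℝ)) ^ 2 := by
    rw [mul_div_mul_left _ _ hγ.ne',
      show (4 : ℝ) / 3 / (1 / 3) = (2 : ℕ) * (2 : ℕ) by norm_num, rpow_mul (by positivity),
      rpow_natCast, rpow_natCast, div_pow, sq_sqrt ht₀.le, sq_sqrt (by linarith)]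
    field_simp
  set S := ∑ i ∈ I, (x i) ^ ((4 : ℝ) / 3)
  have hS : 0 ≤ S := sum_nonneg fun i _ => rpow_nonneg (hx i).1.le _
  have hfactor : 1 ≤ (1 + 1 / (t : ℝ)) ^ 2 := one_le_pow₀ (by simp [ht₀.le])
  refine ⟨?_, ?_⟩
  · rcases le_or_gt c 0 with hc | hc
    · calc ∑ i ∈ I, (y i) ^ ((4 : ℝ) / 3)
            ≤ ∑ i ∈ I, (1 + 1 / (t : ℝ)) ^ 2 * (x i) ^ ((4 : ℝ) / 3) := by
            gcongr with i hi
            rw [← hratio]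
            refine rpow_le_of_mul_rpow_neg_le (by positivity) (by positivity) (hx i).1 (hy i).1
              (by norm_num) (by norm_num) ?_
            linarith [hkkt i hi, hℓ i]
        _ = (1 + 1 / (t : ℝ)) ^ 2 * S := (mul_sum _ _ _).symm
        _ ≤ 2 * (1 + 1 / (t : ℝ)) ^ 2 * S := by nlinarith
    · have hlt : ∀ i ∈ I, i ≠ i₀ → x i < y i := fun i hi hne =>
        lt_of_mul_rpow_neg_lt (by positivity) hrate (hx i).1 (hy i).1
          (by norm_num : (0 : ℝ) < 1 / 3)
          (by linarith [hkkt i hi, hi₀ i hne])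
      have hi₀I : i₀ ∈ I := by
        by_contra h
        have := sum_lt_sum_of_nonempty hI fun i hi => hlt i hi (ne_of_mem_of_not_mem hi h)
        linarith
      have htwo : (2 : ℝ) ^ ((4 : ℝ) / 3 - 1) ≤ 2 := by
        simpa using rpow_le_rpow_of_exponent_le (by norm_num : (1 : ℝ) ≤ 2)
          (by norm_num : (4 : ℝ) / 3 - 1 ≤ 1)
      calc ∑ i ∈ I, (y i) ^ ((4 : ℝ) / 3) ≤ 2 ^ ((4 : ℝ) / 3 - 1) * S :=
            sum_rpow_le_two_rpow_mul_sum_rpow_of_sum_eq (by norm_num) hi₀I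
              (fun i _ => (hx i).1.le) (fun i _ => (hy i).1.le)
              (fun i hi hne => (hlt i hi hne).le) hsum
        _ ≤ 2 * (1 + 1 / (t : ℝ)) ^ 2 * S := by nlinarith
  · have : 1 / (t : ℝ) ≤ 1 := by rw [div_le_one ht₀]; exact_mod_cast ht
    calc 2 * (1 + 1 / (t : ℝ)) ^ 2 * S ≤ 2 * (1 + 1) ^ 2 * S := by gcongr
      _ = 8 * S := by norm_num
end

section
/- Let U and V be disjoint finite nonempty index sets and K = U ∪ V, and let w_i > 0 and p_i > 0 for all i ∈ K. Then ( (∑_{i∈V} 1/w_i) · (∑_{i∈U} 1/(w_i² p_i)) ) / ( (∑_{i∈K} 1/w_i) · (∑_{i∈U} 1/w_i) ) ≤ ∑_{i∈V} 1/(p_i w_i) + ∑_{i∈U} [𝟙{p_i ≤ ∑_{j∈V} p_j} / (p_i w_i)] · ( (1/w_i) / (∑_{j∈U} 1/w_j) ), where 𝟙{·} is the indicator function. -/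
/-!
With `a i = 1 / w i`, let `A`, `B` be the sums of `a` over `V` and `U`, and `P` the total
probability of `V`. The arms `i ∈ U` with `p i ≤ P` are charged to the second sum on the right,
since `A` is at most the sum of `a` over `U ∪ V`. For the remaining arms `P / p i < 1`, so their
part of `∑ i ∈ U, a i ^ 2 / p i` is at most `B ^ 2 / P`; and `A ≤ P * ∑ i ∈ V, a i / p i`
turns this into the first sum.
-/

open Finset

lemma Finset.sum_le_sum_mul_sum_div {ι : Type*} {s : Finset ι} {a p : ι → ℝ}
    (ha : ∀ i ∈ s, 0 ≤ a i) (hp : ∀ i ∈ s, 0 < p i) :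
    ∑ i ∈ s, a i ≤ (∑ i ∈ s, p i) * ∑ i ∈ s, a i / p i := by
  rw [sum_mul]
  refine sum_le_sum fun i hi => ?_
  calc a i = p i * (a i / p i) := (mul_div_cancel₀ _ (hp i hi).ne').symm
    _ ≤ p i * ∑ j ∈ s, a j / p j :=
      mul_le_mul_of_nonneg_left
        (single_le_sum (fun j hj => div_nonneg (ha j hj) (hp j hj).le) hi) (hp i hi).le

lemma Finset.mul_sum_filter_lt_sq_div_le_sq_sum {ι : Type*} {s : Finset ι} {a p : ι → ℝ} {c : ℝ}
    (hc : 0 ≤ c) (ha : ∀ i ∈ s, 0 ≤ a i) :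
    c * ∑ i ∈ s with c < p i, a i ^ 2 / p i ≤ (∑ i ∈ s, a i) ^ 2 :=
  calc c * ∑ i ∈ s with c < p i, a i ^ 2 / p i
      ≤ ∑ i ∈ s with c < p i, a i ^ 2 := by
        rw [mul_sum]
        refine sum_le_sum fun i hi => ?_
        have hcp : c < p i := (mem_filter.mp hi).2
        rw [mul_div_assoc', div_le_iff₀ (hc.trans_lt hcp), mul_comm]
        exact mul_le_mul_of_nonneg_left hcp.le (sq_nonneg _)
    _ ≤ ∑ i ∈ s, a i ^ 2 :=
        sum_le_sum_of_subset_of_nonneg (filter_subset _ _) fun _ _ _ => sq_nonneg _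
    _ ≤ (∑ i ∈ s, a i) ^ 2 := sum_sq_le_sq_sum_of_nonneg ha

lemma mul_add_div_mul_le_add_div {A B S P R T₁ T₂ : ℝ} (hB : 0 ≤ B) (hR : 0 ≤ R)
    (hT₁ : 0 ≤ T₁) (hT₂ : 0 ≤ T₂) (hAS : A ≤ S) (hBS : B ≤ S) (hAPR : A ≤ P * R)
    (hPT₂ : P * T₂ ≤ B ^ 2) :
    A * (T₁ + T₂) / (S * B) ≤ R + T₁ / B := by
  have hS : 0 ≤ S := hB.trans hBS
  have h₁ : A * T₁ / (S * B) ≤ T₁ / B := by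
    rw [mul_div_mul_comm]
    exact mul_le_of_le_one_left (div_nonneg hT₁ hB) (div_le_one_of_le₀ hAS hS)
  have h₂ : A * T₂ / (S * B) ≤ R := by
    refine div_le_of_le_mul₀ (mul_nonneg hS hB) hR ?_
    calc A * T₂ ≤ P * R * T₂ := mul_le_mul_of_nonneg_right hAPR hT₂
      _ = R * (P * T₂) := by ring
      _ ≤ R * B ^ 2 := mul_le_mul_of_nonneg_left hPT₂ hR
      _ ≤ R * (S * B) := by
        rw [sq]
        exact mul_le_mul_of_nonneg_left (mul_le_mul_of_nonneg_right hBS hB) hR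
  rw [mul_add, add_div]
  linarith

theorem sum_mul_sum_sq_div_div_le {ι : Type*} {U V K : Finset ι} (hUK : U ⊆ K) (hVK : V ⊆ K)
    {a p : ι → ℝ} (ha : ∀ i ∈ K, 0 ≤ a i) (hpU : ∀ i ∈ U, 0 ≤ p i) (hpV : ∀ i ∈ V, 0 < p i) :
    (∑ i ∈ V, a i) * (∑ i ∈ U, a i ^ 2 / p i) / ((∑ i ∈ K, a i) * ∑ i ∈ U, a i) ≤
      ∑ i ∈ V, a i / p i + (∑ i ∈ U with p i ≤ ∑ j ∈ V, p j, a i ^ 2 / p i) / ∑ i ∈ U, a i := by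
  have haU : ∀ i ∈ U, 0 ≤ a i := fun i hi => ha i (hUK hi)
  have haV : ∀ i ∈ V, 0 ≤ a i := fun i hi => ha i (hVK hi)
  rw [← sum_filter_add_sum_filter_not U (fun i => p i ≤ ∑ j ∈ V, p j)]
  simp only [not_le]
  refine mul_add_div_mul_le_add_div (sum_nonneg haU)
    (sum_nonneg fun i hi => div_nonneg (haV i hi) (hpV i hi).le)
    (sum_nonneg fun i hi => div_nonneg (sq_nonneg _) (hpU i (mem_filter.mp hi).1))
    (sum_nonneg fun i hi => div_nonneg (sq_nonneg _) (hpU i (mem_filter.mp hi).1))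
    (sum_le_sum_of_subset_of_nonneg hVK fun i hi _ => ha i hi)
    (sum_le_sum_of_subset_of_nonneg hUK fun i hi _ => ha i hi)
    (sum_le_sum_mul_sum_div haV hpV)
    (mul_sum_filter_lt_sq_div_le_sq_sum (sum_nonneg fun i hi => (hpV i hi).le) haU)

theorem residual_regret_split_general {ι : Type*} [DecidableEq ι]
    (U V : Finset ι)
    (w p : ι → ℝ) (hw : ∀ i ∈ U ∪ V, 0 < w i) (hp : ∀ i ∈ U ∪ V, 0 < p i) :
    ((∑ i ∈ V, 1 / w i) * (∑ i ∈ U, 1 / ((w i) ^ 2 * p i))) /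
        ((∑ i ∈ U ∪ V, 1 / w i) * (∑ i ∈ U, 1 / w i))
      ≤ (∑ i ∈ V, 1 / (p i * w i)) +
        ∑ i ∈ U, (if p i ≤ ∑ j ∈ V, p j then 1 / (p i * w i) else 0) *
          ((1 / w i) / (∑ j ∈ U, 1 / w j)) := by
  have hsq (i : ι) : 1 / (w i ^ 2 * p i) = (1 / w i) ^ 2 / p i := by ring
  have hdiv (i : ι) : 1 / (p i * w i) = 1 / w i / p i := by ring
  have hsplit : ∑ i ∈ U, (if p i ≤ ∑ j ∈ V, p j then 1 / (p i * w i) else 0) *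
      ((1 / w i) / (∑ j ∈ U, 1 / w j)) =
      (∑ i ∈ U with p i ≤ ∑ j ∈ V, p j, (1 / w i) ^ 2 / p i) / ∑ i ∈ U, 1 / w i := by
    rw [sum_filter, sum_div]
    refine sum_congr rfl fun i _ => ?_
    split_ifs <;> ring
  rw [hsplit]
  simp only [hsq, hdiv]
  exact sum_mul_sum_sq_div_div_le subset_union_left subset_union_right
    (fun i hi => (one_div_pos.mpr (hw i hi)).le) (fun i hi => (hp i (mem_union_left _ hi)).le)
    (fun i hi => hp i (mem_union_right _ hi))

/-- Lemma A.9 (`app_resreg_main_decomp`): algebraic residual-regret splitting inequality. -/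
theorem residual_regret_split {ι : Type*} [DecidableEq ι]
    (U V : Finset ι) (hUV : Disjoint U V) (hU : U.Nonempty) (hV : V.Nonempty)
    (w p : ι → ℝ) (hw : ∀ i ∈ U ∪ V, 0 < w i) (hp : ∀ i ∈ U ∪ V, 0 < p i) :
    ((∑ i ∈ V, 1 / w i) * (∑ i ∈ U, 1 / ((w i) ^ 2 * p i))) /
        ((∑ i ∈ U ∪ V, 1 / w i) * (∑ i ∈ U, 1 / w i))
      ≤ (∑ i ∈ V, 1 / (p i * w i)) +
        ∑ i ∈ U, (if p i ≤ ∑ j ∈ V, p j then 1 / (p i * w i) else 0) *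
          ((1 / w i) / (∑ j ∈ U, 1 / w j)) :=
  residual_regret_split_general U V w p hw hp
end

section
/- Let K ≥ 1, let U and V partition [K], and for each i ∈ [K] let f_i, g_i : (0,∞) → ℝ be differentiable. For p, p̄, p' ∈ (0,∞)^K, suppose there exist constants c_U, c_V ∈ ℝ with g_i'(p̄_i) − g_i'(p'_i) = c_V for all i ∈ V and g_i'(p̄_i) − g_i'(p'_i) = c_U for all i ∈ U, and suppose ∑_{i∈V} p_i = ∑_{i∈V} p̄_i and ∑_{i∈U} p_i = ∑_{i∈U} p̄_i. Then D^{t,t+1}_{[K]}(p, p') = D^{t,t+1}_V(p, p̄) + D^{t,t+1}_U(p, p̄) + D^{t+1}_{[K]}(p̄, p'), where for an index set I, D^{t,t+1}_I(x, y) = ∑_{i∈I} ( f_i(x_i) − g_i(y_i) − g_i'(y_i)(x_i − y_i) ) and D^{t+1}_I(x, y) = ∑_{i∈I} ( g_i(x_i) − g_i(y_i) − g_i'(y_i)(x_i − y_i) ). -/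
/-!
Coordinatewise, the three-point identity for Bregman divergences gives
`D(p, p') = D(p, p̄) + D_g(p̄, p') + (g'(p̄) - g'(p')) (p - p̄)`. On each block of the partition
the gradient difference is a constant `c`, so the cross terms sum to `c · ∑ (p_i - p̄_i)`, which
vanishes because `p` and `p̄` have the same mass on the block.
-/

open Finset

section

variable {ι : Type*}

/-- `skewedBregman S f g g' x y` is the paper's `D^{t,t+1}_S(x, y)`; with `f = g` it is
`D^{t+1}_S(x, y)`. -/
def skewedBregman (S : Finset ι) (f g g' : ι → ℝ → ℝ) (x y : ι → ℝ) : ℝ :=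
  ∑ i ∈ S, (f i (x i) - g i (y i) - g' i (y i) * (x i - y i))

theorem skewedBregman_union [DecidableEq ι] {S T : Finset ι} (h : Disjoint S T)
    (f g g' : ι → ℝ → ℝ) (x y : ι → ℝ) :
    skewedBregman (S ∪ T) f g g' x y = skewedBregman S f g g' x y + skewedBregman T f g g' x y :=
  sum_union h

theorem skewedBregman_three_point (S : Finset ι) (f g g' : ι → ℝ → ℝ) (x y z : ι → ℝ) :
    skewedBregman S f g g' x z = skewedBregman S f g g' x y + skewedBregman S g g g' y z
      + ∑ i ∈ S, (g' i (y i) - g' i (z i)) * (x i - y i) := by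
  simp only [skewedBregman, ← sum_add_distrib]
  exact sum_congr rfl fun i _ => by ring

theorem skewedBregman_eq_add_of_gradDiff_eq_const {S : Finset ι} {g' : ι → ℝ → ℝ}
    {y z : ι → ℝ} {c : ℝ} (hc : ∀ i ∈ S, g' i (y i) - g' i (z i) = c) (f g : ι → ℝ → ℝ)
    {x : ι → ℝ} (hmass : ∑ i ∈ S, x i = ∑ i ∈ S, y i) :
    skewedBregman S f g g' x z = skewedBregman S f g g' x y + skewedBregman S g g g' y z := by
  have hcross : ∑ i ∈ S, (g' i (y i) - g' i (z i)) * (x i - y i) = 0 := calc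
    _ = ∑ i ∈ S, c * (x i - y i) := sum_congr rfl fun i hi => by rw [hc i hi]
    _ = 0 := by rw [← mul_sum, sum_sub_distrib, hmass, sub_self, mul_zero]
  rw [skewedBregman_three_point S f g g' x y z, hcross, add_zero]

end

theorem skewed_bregman_decomposition_general
    (K : ℕ)
    (U V : Finset (Fin K)) (hdisj : Disjoint U V) (hcover : U ∪ V = Finset.univ)
    (f g g' : Fin K → ℝ → ℝ)
    (p pbar p' : Fin K → ℝ)
    (cU cV : ℝ)
    (hV : ∀ i ∈ V, g' i (pbar i) - g' i (p' i) = cV)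
    (hU : ∀ i ∈ U, g' i (pbar i) - g' i (p' i) = cU)
    (hsumV : ∑ i ∈ V, p i = ∑ i ∈ V, pbar i)
    (hsumU : ∑ i ∈ U, p i = ∑ i ∈ U, pbar i) :
    ∑ i, (f i (p i) - g i (p' i) - g' i (p' i) * (p i - p' i))
      = (∑ i ∈ V, (f i (p i) - g i (pbar i) - g' i (pbar i) * (p i - pbar i)))
        + (∑ i ∈ U, (f i (p i) - g i (pbar i) - g' i (pbar i) * (p i - pbar i)))
        + (∑ i, (g i (pbar i) - g i (p' i) - g' i (p' i) * (pbar i - p' i))) := by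
  change skewedBregman univ f g g' p p' = skewedBregman V f g g' p pbar
    + skewedBregman U f g g' p pbar + skewedBregman univ g g g' pbar p'
  rw [← hcover, skewedBregman_union hdisj, skewedBregman_union hdisj,
    skewedBregman_eq_add_of_gradDiff_eq_const hU f g hsumU,
    skewedBregman_eq_add_of_gradDiff_eq_const hV f g hsumV]
  ring

/-- Lemma 4.3 (`main_decomp`): decomposition of the skewed Bregman divergence. -/
theorem skewed_bregman_decomposition
    (K : ℕ) (hK : 1 ≤ K)
    (U V : Finset (Fin K)) (hdisj : Disjoint U V) (hcover : U ∪ V = Finset.univ)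
    (f g f' g' : Fin K → ℝ → ℝ)
    (hf : ∀ i, ∀ u ∈ Set.Ioi (0 : ℝ), HasDerivAt (f i) (f' i u) u)
    (hg : ∀ i, ∀ u ∈ Set.Ioi (0 : ℝ), HasDerivAt (g i) (g' i u) u)
    (p pbar p' : Fin K → ℝ)
    (hp : ∀ i, 0 < p i) (hpbar : ∀ i, 0 < pbar i) (hp' : ∀ i, 0 < p' i)
    (cU cV : ℝ)
    (hV : ∀ i ∈ V, g' i (pbar i) - g' i (p' i) = cV)
    (hU : ∀ i ∈ U, g' i (pbar i) - g' i (p' i) = cU)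
    (hsumV : ∑ i ∈ V, p i = ∑ i ∈ V, pbar i)
    (hsumU : ∑ i ∈ U, p i = ∑ i ∈ U, pbar i) :
    ∑ i, (f i (p i) - g i (p' i) - g' i (p' i) * (p i - p' i))
      = (∑ i ∈ V, (f i (p i) - g i (pbar i) - g' i (pbar i) * (p i - pbar i)))
        + (∑ i ∈ U, (f i (p i) - g i (pbar i) - g' i (pbar i) * (p i - pbar i)))
        + (∑ i, (g i (pbar i) - g i (p' i) - g' i (p' i) * (pbar i - p' i))) :=
  skewed_bregman_decomposition_general K U V hdisj hcover f g g' p pbar p' cU cV hV hU hsumV hsumU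
end

section
/- Let R ∈ ℝ and A, B, C ≥ 0 be reals. If R ≤ z·(R + C) + A/z + B for every z ∈ (0,1), then R ≤ 6·√(A·C) + 11·A + 4·B. -/
/-- Self-bounding-to-regret conversion from the proof of Theorem 3.3. -/
theorem self_bounding_conversion (R A B C : ℝ)
    (hA : 0 ≤ A) (hB : 0 ≤ B) (hC : 0 ≤ C)
    (h : ∀ z ∈ Set.Ioo (0 : ℝ) 1, R ≤ z * (R + C) + A / z + B) :
    R ≤ 6 * Real.sqrt (A * C) + 11 * A + 4 * B := by
  have hs : 0 ≤ Real.sqrt (A * C) := Real.sqrt_nonneg _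
  rcases le_or_gt R 0 with hR | hR
  · nlinarith
  rcases eq_or_lt_of_le hC with hC0 | hCpos
  · -- C = 0 : use z = 1/2
    have h2 := h (1/2) ⟨by norm_num, by norm_num⟩
    rw [← hC0] at h2
    have : A / (1/2 : ℝ) = 2 * A := by ring
    rw [this] at h2
    nlinarith
  rcases eq_or_lt_of_le hA with hA0 | hApos
  · -- A = 0 : take z small to get R ≤ B + ε for all ε > 0
    have hcr : 0 < C + R := by linarith
    have hRB : R ≤ B := by
      apply le_of_forall_pos_le_add
      intro ε hε
      set z := min (1/2 : ℝ) (ε / (2 * (C + R))) with hz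
      have hz0 : 0 < z := lt_min (by norm_num) (by positivity)
      have hz1 : z < 1 := lt_of_le_of_lt (min_le_left _ _) (by norm_num)
      have h2 := h z ⟨hz0, hz1⟩
      rw [← hA0, zero_div] at h2
      have hle : z ≤ ε / (2 * (C + R)) := min_le_right _ _
      have hzc : z * (R + C) ≤ ε / 2 := by
        have h3 : z * (R + C) ≤ (ε / (2 * (C + R))) * (R + C) :=
          mul_le_mul_of_nonneg_right hle (by linarith)
        have h4 : (ε / (2 * (C + R))) * (R + C) = ε / 2 := by
          field_simp; ring
        linarith [h4 ▸ h3]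
      linarith
    nlinarith
  · -- A > 0, C > 0
    have hsA : 0 < Real.sqrt A := Real.sqrt_pos.mpr hApos
    have hsC : 0 < Real.sqrt C := Real.sqrt_pos.mpr hCpos
    have hAC : Real.sqrt (A * C) = Real.sqrt A * Real.sqrt C := Real.sqrt_mul hA C
    have hA2 : Real.sqrt A ^ 2 = A := Real.sq_sqrt hA
    have hC2 : Real.sqrt C ^ 2 = C := Real.sq_sqrt hC
    set z0 := Real.sqrt A / Real.sqrt C with hz0def
    have hz0pos : 0 < z0 := div_pos hsA hsC
    rcases le_or_gt z0 (1/2) with hcase | hcase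
    · have h2 := h z0 ⟨hz0pos, by linarith⟩
      have e1 : z0 * C = Real.sqrt A * Real.sqrt C := by
        rw [hz0def]; field_simp; nlinarith
      have e2 : A / z0 = Real.sqrt A * Real.sqrt C := by
        rw [hz0def, div_div_eq_mul_div]
        field_simp
        nlinarith
      have h3 : R ≤ z0 * R + 2 * Real.sqrt (A * C) + B := by
        rw [hAC]; nlinarith [h2]
      nlinarith [mul_le_mul_of_nonneg_left hcase (le_of_lt hR)]
    · have h2 := h (1/2) ⟨by norm_num, by norm_num⟩
      have hsq : 1/2 * Real.sqrt C < Real.sqrt A := (lt_div_iff₀ hsC).mp hcase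
      have hC4 : C < 4 * A := by nlinarith [hsq, hA2, hC2, hsA, hsC]
      have : A / (1/2 : ℝ) = 2 * A := by ring
      rw [this] at h2
      nlinarith
end
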